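/- arXiv:2210.01018 — 15 statements merged into one kernel-verified Lean document; each statement's English description precedes it below -/
import Mathlib

section
/- Let X be a Priestley space and A ⊆ X a subset. Then the upward closure of the topological closure of A equals the intersection of all clopen up-sets of X containing A. -/
/-!
Every closed up-set containing `A` contains `closure A` and hence its upward closure. Conversely,
if `y` lies above no point of the compact set `closure A`, then each point of `closure A` is
separated from `y` by a clopen up-set; finitely many of them cover `closure A`, and their union is
a clopen up-set containing `A` but not `y`.
-/

open Set

section

variable {X : Type*} [TopologicalSpace X] [Preorder X]

theorem upperClosure_closure_subset {A U : Set X} (hU : IsClosed U) (hUu : IsUpperSet U)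
    (hAU : A ⊆ U) : (upperClosure (closure A) : Set X) ⊆ U := by
  rintro y ⟨x, hx, hxy⟩
  exact hUu hxy (closure_minimal hAU hU hx)

theorem IsCompact.exists_isClopen_isUpperSet_superset_notMem
    {K : Set X} (hK : IsCompact K) {y : X}
    (hsep : ∀ x ∈ K, ∃ U : Set X, IsClopen U ∧ IsUpperSet U ∧ x ∈ U ∧ y ∉ U) :
    ∃ U : Set X, IsClopen U ∧ IsUpperSet U ∧ K ⊆ U ∧ y ∉ U := by
  choose U hUc hUu hxU hyU using fun x : K => hsep x x.2
  obtain ⟨t, hcover⟩ := hK.elim_finite_subcover U (fun x => (hUc x).isOpen)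
    fun x hx => mem_iUnion.2 ⟨⟨x, hx⟩, hxU ⟨x, hx⟩⟩
  refine ⟨⋃ x ∈ t, U x, t.finite_toSet.isClopen_biUnion fun x _ => hUc x,
    isUpperSet_iUnion₂ fun x _ => hUu x, hcover, ?_⟩
  simp only [mem_iUnion, not_exists]
  exact fun x _ => hyU x

end

/-- In a Priestley space `X` (compact, totally order-disconnected),
for any subset `A`, the upward closure of the topological closure of `A` equals the
intersection of all clopen up-sets containing `A`. -/
theorem stmt_0 {X : Type*} [TopologicalSpace X] [PartialOrder X] [CompactSpace X]
    (htod : ∀ x y : X, ¬x ≤ y → ∃ U : Set X, IsClopen U ∧ IsUpperSet U ∧ x ∈ U ∧ y ∉ U)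
    (A : Set X) :
    (upperClosure (closure A) : Set X) =
      ⋂₀ {U : Set X | IsClopen U ∧ IsUpperSet U ∧ A ⊆ U} := by
  refine (subset_sInter ?_).antisymm fun y hy => ?_
  · rintro U ⟨hUc, hUu, hAU⟩
    exact upperClosure_closure_subset hUc.isClosed hUu hAU
  by_contra hyA
  obtain ⟨U, hUc, hUu, hAU, hyU⟩ :=
    isClosed_closure.isCompact.exists_isClopen_isUpperSet_superset_notMem
      fun x hx => htod x y fun hxy => hyA ⟨x, hx, hxy⟩
  exact hyU (hy U ⟨hUc, hUu, subset_closure.trans hAU⟩)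
end

section
/- For any cofiltered diagram D : I → KOrd of compact ordered spaces, if D(i) is non-empty for all i ∈ I, then the limit of D is non-empty. -/
open CategoryTheory

section Aux

universe v u w

variable {J : Type u} [Category.{v} J] (F : J ⥤ TopCat.{w})

private abbrev MyFiniteDiagramArrow (G : Finset J) :=
  Σ' (X Y : J) (_ : X ∈ G) (_ : Y ∈ G), X ⟶ Y

private abbrev MyFiniteDiagram (J : Type u) [Category.{v} J] :=
  Σ G : Finset J, Finset (MyFiniteDiagramArrow G)

private def myPartialSections {G : Finset J}
    (H : Finset (MyFiniteDiagramArrow G)) : Set (∀ j, F.obj j) :=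
  {u | ∀ {f : MyFiniteDiagramArrow G} (_ : f ∈ H), F.map f.2.2.2.2 (u f.1) = u f.2.1}

private theorem myPartialSections.nonempty [IsCofilteredOrEmpty J]
    [h : ∀ j : J, Nonempty (F.obj j)]
    {G : Finset J} (H : Finset (MyFiniteDiagramArrow G)) :
    (myPartialSections F H).Nonempty := by
  classical
  cases isEmpty_or_nonempty J
  · exact ⟨isEmptyElim, fun {j} => IsEmpty.elim' inferInstance j.1⟩
  haveI : IsCofiltered J := ⟨⟩
  use fun j : J =>
    if hj : j ∈ G then F.map (IsCofiltered.infTo G H hj) (h (IsCofiltered.inf G H)).some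
    else (h _).some
  rintro ⟨X, Y, hX, hY, f⟩ hf
  dsimp only
  rwa [dif_pos hX, dif_pos hY, ← TopCat.comp_app, ← F.map_comp,
    @IsCofiltered.infTo_commutes _ _ _ G H]

private theorem myPartialSections.directed :
    Directed (· ⊇ ·) fun G : MyFiniteDiagram J => myPartialSections F G.2 := by
  classical
  intro A B
  let ιA : MyFiniteDiagramArrow A.1 → MyFiniteDiagramArrow (A.1 ⊔ B.1) := fun f =>
    ⟨f.1, f.2.1, Finset.mem_union_left _ f.2.2.1, Finset.mem_union_left _ f.2.2.2.1, f.2.2.2.2⟩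
  let ιB : MyFiniteDiagramArrow B.1 → MyFiniteDiagramArrow (A.1 ⊔ B.1) := fun f =>
    ⟨f.1, f.2.1, Finset.mem_union_right _ f.2.2.1, Finset.mem_union_right _ f.2.2.2.1, f.2.2.2.2⟩
  refine ⟨⟨A.1 ⊔ B.1, A.2.image ιA ⊔ B.2.image ιB⟩, ?_, ?_⟩
  · rintro u hu f hf
    have : ιA f ∈ A.2.image ιA ⊔ B.2.image ιB := by
      apply Finset.mem_union_left
      rw [Finset.mem_image]
      exact ⟨f, hf, rfl⟩
    exact hu this
  · rintro u hu f hf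
    have : ιB f ∈ A.2.image ιA ⊔ B.2.image ιB := by
      apply Finset.mem_union_right
      rw [Finset.mem_image]
      exact ⟨f, hf, rfl⟩
    exact hu this

private theorem myPartialSections.closed [∀ j : J, T2Space (F.obj j)] {G : Finset J}
    (H : Finset (MyFiniteDiagramArrow G)) : IsClosed (myPartialSections F H) := by
  have :
    myPartialSections F H =
      ⋂ (f : MyFiniteDiagramArrow G) (_ : f ∈ H), {u | F.map f.2.2.2.2 (u f.1) = u f.2.1} := by
    ext1
    simp only [Set.mem_iInter, Set.mem_setOf_eq]
    rfl
  rw [this]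
  apply isClosed_biInter
  intro f _
  have : T2Space ((forget TopCat).obj (F.obj f.snd.fst)) :=
    inferInstanceAs (T2Space (F.obj f.snd.fst))
  apply isClosed_eq
  · exact (F.map f.snd.snd.snd.snd).hom.continuous.comp (continuous_apply f.fst)
  · continuity

end Aux

/-- A cofiltered limit of non-empty compact ordered spaces is non-empty.
The diagram is given by a functor `F : J ⥤ TopCat` (so all transition maps are continuous)
whose objects carry a partial order closed in the product topology, all objects are compact,
and all transition maps are monotone. The limit is computed as in `Set`, i.e. as the set of
compatible families (sections). -/
theorem stmt_2 {J : Type*} [Category J] [IsCofiltered J]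
    (F : J ⥤ TopCat)
    [∀ j, PartialOrder (F.obj j)]
    [∀ j, CompactSpace (F.obj j)]
    (hclosed : ∀ j, IsClosed {p : F.obj j × F.obj j | p.1 ≤ p.2})
    (hmono : ∀ {i j : J} (f : i ⟶ j), Monotone (F.map f))
    (hne : ∀ j, Nonempty (F.obj j)) :
    ∃ s : ∀ j, F.obj j, ∀ {i j : J} (f : i ⟶ j), F.map f (s i) = s j := by
  classical
  have hT2 : ∀ j, T2Space (F.obj j) := by
    intro j
    refine ⟨fun x y hxy => ?_⟩
    have hnle : ¬ (x ≤ y) ∨ ¬ (y ≤ x) := by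
      by_contra h
      push_neg at h
      exact hxy (le_antisymm h.1 h.2)
    have hopen : IsOpen {p : F.obj j × F.obj j | ¬ p.1 ≤ p.2} := by
      have := (hclosed j).isOpen_compl
      simpa [Set.compl_setOf] using this
    rcases hnle with h | h
    · rcases isOpen_prod_iff.1 hopen x y h with ⟨u, v, hu, hv, hxu, hyv, huv⟩
      exact ⟨u, v, hu, hv, hxu, hyv, Set.disjoint_left.2 fun a hau hav =>
        (huv (Set.mk_mem_prod hau hav)) le_rfl⟩
    · rcases isOpen_prod_iff.1 hopen y x h with ⟨u, v, hu, hv, hyu, hxv, huv⟩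
      exact ⟨v, u, hv, hu, hxv, hyu, Set.disjoint_left.2 fun a hav hau =>
        (huv (Set.mk_mem_prod hau hav)) le_rfl⟩
  haveI := hT2
  haveI := hne
  obtain ⟨u, hu⟩ :=
    IsCompact.nonempty_iInter_of_directed_nonempty_isCompact_isClosed
      (fun G : MyFiniteDiagram J => myPartialSections F G.2)
      (myPartialSections.directed F) (fun G => myPartialSections.nonempty F _)
      (fun G => IsClosed.isCompact (myPartialSections.closed F _)) fun G =>
      myPartialSections.closed F _
  refine ⟨u, fun {X Y} f => ?_⟩
  let G : MyFiniteDiagram J :=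
    ⟨{X, Y},
      {⟨X, Y, by simp only [true_or, eq_self_iff_true, Finset.mem_insert], by
          simp only [eq_self_iff_true, or_true, Finset.mem_insert, Finset.mem_singleton], f⟩}⟩
  exact hu _ ⟨G, rfl⟩ (Finset.mem_singleton_self _)
end

section
/- Let A, B, C, D be posets with monotone maps f : A → B, g : A → C, u : B → D, v : C → D satisfying u ∘ f ≤ v ∘ g pointwise. Suppose f and v have left adjoints f⁻ : B → A and v⁻ : D → C. Then the square has the interpolation property (for all b ∈ B, c ∈ C with u(b) ≤ v(c) there exists a ∈ A with b ≤ f(a) and g(a) ≤ c) if and only if g ∘ f⁻ = v⁻ ∘ u. -/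
/-!
With `a := f⁻ b` as the canonical candidate, interpolation for `(b, c)` reduces to
`g (f⁻ b) ≤ c`, while `u b ≤ v c` means `v⁻ (u b) ≤ c`; so interpolation is the inequality
`g ∘ f⁻ ≤ v⁻ ∘ u`. The reverse inequality holds for every lax square: it is the mate of
`u ∘ f ≤ v ∘ g`.
-/

section LaxSquare

variable {A B C D : Type*} [PartialOrder A] [PartialOrder B] [PartialOrder C] [PartialOrder D]
  {f : A → B} {g : A → C} {u : B → D} {v : C → D} {f' : B → A} {v' : D → C}

def HasInterpolation (f : A → B) (g : A → C) (u : B → D) (v : C → D) : Prop :=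
  ∀ (b : B) (c : C), u b ≤ v c → ∃ a : A, b ≤ f a ∧ g a ≤ c

theorem hasInterpolation_iff_comp_leftAdjoint_le (hg : Monotone g)
    (hf' : GaloisConnection f' f) (hv' : GaloisConnection v' v) :
    HasInterpolation f g u v ↔ ∀ b : B, g (f' b) ≤ v' (u b) := by
  constructor
  · intro h b
    obtain ⟨a, hba, hac⟩ := h b (v' (u b)) (hv'.le_u_l (u b))
    exact (hg (hf'.l_le hba)).trans hac
  · intro h b c hbc
    exact ⟨f' b, hf'.le_u_l b, (h b).trans (hv'.l_le hbc)⟩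

theorem leftAdjoint_comp_le_comp_leftAdjoint_of_lax (hu : Monotone u) (hlax : ∀ a : A, u (f a) ≤ v (g a))
    (hf' : GaloisConnection f' f) (hv' : GaloisConnection v' v) (b : B) :
    v' (u b) ≤ g (f' b) :=
  hv'.l_le ((hu (hf'.le_u_l b)).trans (hlax (f' b)))

end LaxSquare

theorem stmt_3_general {A B C D : Type*} [PartialOrder A] [PartialOrder B] [PartialOrder C]
    [PartialOrder D]
    (f : A → B) (g : A → C) (u : B → D) (v : C → D)
    (hg : Monotone g) (hu : Monotone u)
    (hlax : ∀ a : A, u (f a) ≤ v (g a))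
    (f' : B → A) (v' : D → C)
    (hf' : GaloisConnection f' f) (hv' : GaloisConnection v' v) :
    (∀ (b : B) (c : C), u b ≤ v c → ∃ a : A, b ≤ f a ∧ g a ≤ c) ↔
      ∀ b : B, g (f' b) = v' (u b) :=
  (hasInterpolation_iff_comp_leftAdjoint_le hg hf' hv').trans
    ⟨fun h b => (h b).antisymm (leftAdjoint_comp_le_comp_leftAdjoint_of_lax hu hlax hf' hv' b),
      fun h b => (h b).le⟩

/-- For a lax commutative square of posets `u ∘ f ≤ v ∘ g`, if `f` and `v`
have left adjoints `f⁻` and `v⁻`, then the square has the interpolation property iff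
`g ∘ f⁻ = v⁻ ∘ u` (the Beck–Chevalley condition). -/
theorem stmt_3 {A B C D : Type*} [PartialOrder A] [PartialOrder B] [PartialOrder C]
    [PartialOrder D]
    (f : A → B) (g : A → C) (u : B → D) (v : C → D)
    (hf : Monotone f) (hg : Monotone g) (hu : Monotone u) (hv : Monotone v)
    (hlax : ∀ a : A, u (f a) ≤ v (g a))
    (f' : B → A) (v' : D → C)
    (hf' : GaloisConnection f' f) (hv' : GaloisConnection v' v) :
    (∀ (b : B) (c : C), u b ≤ v c → ∃ a : A, b ≤ f a ∧ g a ≤ c) ↔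
      ∀ b : B, g (f' b) = v' (u b) :=
  stmt_3_general f g u v hg hu hlax f' v' hf' hv'
end

section
/- Let f : A → B be a lattice homomorphism between distributive lattices admitting a left adjoint f⁻ : B → A. Then the following are equivalent: (1) for every a ∈ A and b ∈ B, f⁻(b ∧ f(a)) = f⁻(b) ∧ a (Frobenius reciprocity); (2) for every a ∈ A, the lax square formed by the projections p_a : A → ↓a, p_{f(a)} : B → ↓f(a) and the restrictions of f has the interpolation property. -/
/-!
Frobenius reciprocity `f⁻ (b ⊓ f a) = f⁻ b ⊓ a` is always an inequality `≤`, and interpolation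
is exactly what supplies the other direction. Given reciprocity, `f⁻ b` interpolates any
`f a ⊓ b ≤ f c`, because `a ⊓ f⁻ b = f⁻ (b ⊓ f a) ≤ c` by adjunction. Conversely, interpolating
`f a ⊓ b ≤ f (f⁻ (b ⊓ f a) ⊓ a)` gives `z` with `b ≤ f z`, so `f⁻ b ≤ z` and
`f⁻ b ⊓ a ≤ a ⊓ z ≤ f⁻ (b ⊓ f a)`.
-/

namespace GaloisConnection

variable {α β : Type*} {l : β → α} {u : α → β}

theorem l_inf_u_le [SemilatticeInf α] [SemilatticeInf β] (gc : GaloisConnection l u)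
    (a : α) (b : β) : l (b ⊓ u a) ≤ l b ⊓ a :=
  le_inf (gc.monotone_l inf_le_left) (gc.l_le inf_le_right)

theorem exists_interpolant_of_l_inf_u_eq [SemilatticeInf α] [SemilatticeInf β]
    (gc : GaloisConnection l u) {a c : α} {b : β} (frobenius : l (b ⊓ u a) = l b ⊓ a)
    (h : u a ⊓ b ≤ u c) : ∃ z, b ≤ u z ∧ a ⊓ z ≤ c := by
  refine ⟨l b, gc.le_u_l b, ?_⟩
  rw [inf_comm, ← frobenius]
  exact gc.l_le (by rwa [inf_comm])

theorem l_inf_u_eq_of_interpolation [Lattice α] [Lattice β] (gc : GaloisConnection l u)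
    {a : α} {b : β} (interpolation : ∀ c ≤ a, u a ⊓ b ≤ u c → ∃ z, b ≤ u z ∧ a ⊓ z ≤ c) :
    l (b ⊓ u a) = l b ⊓ a := by
  refine le_antisymm (gc.l_inf_u_le a b) ?_
  have hc : u a ⊓ b ≤ u (l (b ⊓ u a) ⊓ a) := by
    rw [gc.u_inf, inf_comm]
    exact le_inf (gc.le_u_l _) inf_le_right
  obtain ⟨z, hbz, hz⟩ := interpolation _ inf_le_right hc
  calc l b ⊓ a ≤ a ⊓ z := by rw [inf_comm]; exact inf_le_inf_left a (gc.l_le hbz)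
    _ ≤ l (b ⊓ u a) ⊓ a := hz
    _ ≤ l (b ⊓ u a) := inf_le_left

end GaloisConnection

/-- For a bounded lattice homomorphism `f : A → B` between bounded
distributive lattices admitting a left adjoint `g = f⁻`, Frobenius reciprocity
`g (b ⊓ f a) = g b ⊓ a` holds for all `a, b` iff for every `a ∈ A` the lax square formed by
the projections `p_a : A → ↓a`, `p_{f a} : B → ↓f a` and the restrictions of `f` has the
interpolation property: whenever `f a ⊓ b ≤ f c` with `c ≤ a`, there is `z ∈ A` with
`b ≤ f z` and `a ⊓ z ≤ c`. -/
theorem stmt_4 {A B : Type*} [DistribLattice A] [BoundedOrder A]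
    [DistribLattice B] [BoundedOrder B]
    (f : BoundedLatticeHom A B) (g : B → A) (adj : GaloisConnection g ⇑f) :
    (∀ (a : A) (b : B), g (b ⊓ f a) = g b ⊓ a) ↔
      ∀ (a : A) (b : B) (c : A), c ≤ a → f a ⊓ b ≤ f c →
        ∃ z : A, b ≤ f z ∧ a ⊓ z ≤ c :=
  ⟨fun frobenius a b _ _ h => adj.exists_interpolant_of_l_inf_u_eq (frobenius a b) h,
    fun interpolation a b => adj.l_inf_u_eq_of_interpolation (interpolation a b)⟩
end

section
/- Let f : X → Y be a continuous monotone map between Priestley spaces, with dual lattice homomorphism h : ClU(Y) → ClU(X) given by h(V) = f⁻¹(V) on clopen up-sets. Then h has a left adjoint if and only if for every open up-set U of X, the upward closure ↑f[U] is open in Y. Moreover, in that case the left adjoint g satisfies g(U) = ↑f[U] for every clopen up-set U of X. -/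
/-! In a Priestley space a compact set `K` and a point outside `↑K` are separated by a clopen
up-set, so `↑K` is the intersection of the clopen up-sets containing `K`. A left adjoint `g` of
`f⁻¹` must send `U` to the least clopen up-set containing `f[U]`, which is therefore `↑f[U]`;
conversely `↑f[U]` is always closed for clopen `U`, so once it is open it is a clopen up-set and
is the left adjoint. Finally, every open up-set is a union of clopen up-sets and `U ↦ ↑f[U]`
preserves unions, so openness for clopen up-sets gives openness for all open up-sets. -/

open Set

section Separation

variable {X : Type*} [TopologicalSpace X] [Preorder X] [PriestleySpace X]

theorem exists_isClopen_isUpperSet_mem_disjoint {x : X} {L : Set X} (hL : IsCompact L)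
    (hxL : ∀ b ∈ L, ¬x ≤ b) :
    ∃ W : Set X, IsClopen W ∧ IsUpperSet W ∧ x ∈ W ∧ Disjoint W L := by
  choose W hWc hWu hxW hbW using fun b : L => exists_isClopen_upper_of_not_le (hxL b b.2)
  obtain ⟨t, ht⟩ := hL.elim_finite_subcover (fun b => (W b)ᶜ) (fun b => (hWc b).compl.isOpen)
    fun b hb => mem_iUnion.2 ⟨⟨b, hb⟩, hbW _⟩
  refine ⟨⋂ b ∈ t, W b, t.finite_toSet.isClopen_biInter fun b _ => hWc b,
    isUpperSet_iInter₂ fun b _ => hWu b, mem_iInter₂.2 fun b _ => hxW b, ?_⟩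
  rw [disjoint_iff_inter_eq_empty, eq_empty_iff_forall_notMem]
  rintro a ⟨haW, haL⟩
  obtain ⟨b, hbt, hab⟩ := mem_iUnion₂.1 (ht haL)
  exact hab (mem_iInter₂.1 haW b hbt)

theorem IsCompact.exists_isClopen_isUpperSet_subset_disjoint {K L : Set X} (hK : IsCompact K)
    (hL : IsCompact L) (hKL : ∀ a ∈ K, ∀ b ∈ L, ¬a ≤ b) :
    ∃ W : Set X, IsClopen W ∧ IsUpperSet W ∧ K ⊆ W ∧ Disjoint W L := by
  choose W hWc hWu haW hWL using fun a : K =>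
    exists_isClopen_isUpperSet_mem_disjoint hL (hKL a a.2)
  obtain ⟨t, ht⟩ := hK.elim_finite_subcover W (fun a => (hWc a).isOpen)
    fun a ha => mem_iUnion.2 ⟨⟨a, ha⟩, haW _⟩
  exact ⟨⋃ a ∈ t, W a, t.finite_toSet.isClopen_biUnion fun a _ => hWc a,
    isUpperSet_iUnion₂ fun a _ => hWu a, ht, disjoint_iUnion₂_left.2 fun a _ => hWL a⟩

theorem IsCompact.exists_isClopen_isUpperSet_subset_notMem {K : Set X} (hK : IsCompact K)
    {y : X} (hy : y ∉ upperClosure K) :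
    ∃ W : Set X, IsClopen W ∧ IsUpperSet W ∧ K ⊆ W ∧ y ∉ W := by
  obtain ⟨W, hWc, hWu, hKW, hWy⟩ := hK.exists_isClopen_isUpperSet_subset_disjoint
    isCompact_singleton fun a ha b hb hab => hy ⟨a, ha, hab.trans_eq (eq_of_mem_singleton hb)⟩
  exact ⟨W, hWc, hWu, hKW, disjoint_singleton_right.1 hWy⟩

theorem IsCompact.isClosed_upperClosure {K : Set X} (hK : IsCompact K) :
    IsClosed (upperClosure K : Set X) := by
  refine isOpen_compl_iff.1 (isOpen_iff_forall_mem_open.2 fun y hy => ?_)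
  obtain ⟨W, hWc, hWu, hKW, hWy⟩ := hK.exists_isClopen_isUpperSet_subset_notMem hy
  exact ⟨Wᶜ, compl_subset_compl.2 (upperClosure_min hKW hWu), hWc.compl.isOpen, hWy⟩

theorem IsOpen.exists_isClopen_isUpperSet_mem_subset [CompactSpace X] {U : Set X}
    (hU : IsOpen U) (hUu : IsUpperSet U) {x : X} (hx : x ∈ U) :
    ∃ C : Set X, IsClopen C ∧ IsUpperSet C ∧ x ∈ C ∧ C ⊆ U := by
  obtain ⟨C, hCc, hCu, hxC, hCU⟩ := exists_isClopen_isUpperSet_mem_disjoint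
    hU.isClosed_compl.isCompact fun b hb hxb => hb (hUu hxb hx)
  exact ⟨C, hCc, hCu, hxC, disjoint_compl_right_iff_subset.1 hCU⟩

end Separation

theorem upperClosure_image_subset_iff {X Y : Type*} [Preorder Y] {f : X → Y} {U : Set X}
    {V : Set Y} (hV : IsUpperSet V) : ↑(upperClosure (f '' U)) ⊆ V ↔ U ⊆ f ⁻¹' V :=
  ⟨fun hUV => image_subset_iff.1 (subset_upperClosure.trans hUV),
    fun hUV => upperClosure_min (image_subset_iff.2 hUV) hV⟩

section LeftAdjoint

local notation "ClU(" X ")" => {U : Set X // IsClopen U ∧ IsUpperSet U}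

variable {X Y : Type*} [TopologicalSpace X] [Preorder X] [CompactSpace X]
  [TopologicalSpace Y] [Preorder Y] [PriestleySpace Y] {f : X → Y} (hfc : Continuous f)
  {h : ClU(Y) → ClU(X)} (hh : ∀ V, (h V).1 = f ⁻¹' V.1)
include hfc hh

theorem GaloisConnection.coe_eq_upperClosure_image {g : ClU(X) → ClU(Y)}
    (hg : GaloisConnection g h) (U : ClU(X)) : (g U).1 = ↑(upperClosure (f '' U.1)) := by
  refine Subset.antisymm (fun y hy => ?_) ?_
  · by_contra hyU
    obtain ⟨W, hWc, hWu, hUW, hWy⟩ :=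
      (U.2.1.isClosed.isCompact.image hfc).exists_isClopen_isUpperSet_subset_notMem hyU
    have hgW : g U ≤ ⟨W, hWc, hWu⟩ :=
      hg.l_le (show U.1 ⊆ (h ⟨W, hWc, hWu⟩).1 from hh _ ▸ image_subset_iff.1 hUW)
    exact hWy (hgW hy)
  · exact (upperClosure_image_subset_iff (g U).2.2).2 (hh (g U) ▸ hg.le_u_l U)

theorem GaloisConnection.isOpen_upperClosure_image [PriestleySpace X] {g : ClU(X) → ClU(Y)}
    (hg : GaloisConnection g h) {U : Set X} (hU : IsOpen U) (hUu : IsUpperSet U) :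
    IsOpen (↑(upperClosure (f '' U)) : Set Y) := by
  refine isOpen_iff_forall_mem_open.2 ?_
  rintro y ⟨_, ⟨x, hxU, rfl⟩, hxy⟩
  obtain ⟨C, hCc, hCu, hxC, hCU⟩ := hU.exists_isClopen_isUpperSet_mem_subset hUu hxU
  refine ⟨(g ⟨C, hCc, hCu⟩).1, ?_, (g _).2.1.isOpen, ?_⟩
  · rw [hg.coe_eq_upperClosure_image hfc hh]
    exact UpperSet.coe_subset_coe.2 (upperClosure_anti (image_mono hCU))
  · rw [hg.coe_eq_upperClosure_image hfc hh]
    exact ⟨f x, mem_image_of_mem f hxC, hxy⟩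

theorem exists_galoisConnection_of_isOpen_upperClosure_image
    (hopen : ∀ U : ClU(X), IsOpen (↑(upperClosure (f '' U.1)) : Set Y)) :
    ∃ g : ClU(X) → ClU(Y), GaloisConnection g h :=
  ⟨fun U => ⟨_, ⟨(U.2.1.isClosed.isCompact.image hfc).isClosed_upperClosure, hopen U⟩,
    (upperClosure _).upper⟩,
    fun U V => (upperClosure_image_subset_iff V.2.2).trans (by rw [← hh]; rfl)⟩

end LeftAdjoint

theorem stmt_5_general {X Y : Type*} [TopologicalSpace X] [PartialOrder X] [CompactSpace X]
    [TopologicalSpace Y] [PartialOrder Y]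
    (htodX : ∀ x y : X, ¬x ≤ y → ∃ U : Set X, IsClopen U ∧ IsUpperSet U ∧ x ∈ U ∧ y ∉ U)
    (htodY : ∀ x y : Y, ¬x ≤ y → ∃ U : Set Y, IsClopen U ∧ IsUpperSet U ∧ x ∈ U ∧ y ∉ U)
    (f : X → Y) (hfc : Continuous f)
    (h : {V : Set Y // IsClopen V ∧ IsUpperSet V} → {U : Set X // IsClopen U ∧ IsUpperSet U})
    (hh : ∀ V, (h V).1 = f ⁻¹' V.1) :
    ((∃ g : {U : Set X // IsClopen U ∧ IsUpperSet U} →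
          {V : Set Y // IsClopen V ∧ IsUpperSet V}, GaloisConnection g h) ↔
        ∀ U : Set X, IsOpen U → IsUpperSet U →
          IsOpen (↑(upperClosure (f '' U)) : Set Y)) ∧
      ∀ g : {U : Set X // IsClopen U ∧ IsUpperSet U} →
          {V : Set Y // IsClopen V ∧ IsUpperSet V}, GaloisConnection g h →
        ∀ U, (g U).1 = ↑(upperClosure (f '' U.1)) := by
  have : PriestleySpace X := ⟨htodX _ _⟩
  have : PriestleySpace Y := ⟨htodY _ _⟩
  refine ⟨⟨fun ⟨g, hg⟩ U hU hUu => hg.isOpen_upperClosure_image hfc hh hU hUu,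
    fun hopen => exists_galoisConnection_of_isOpen_upperClosure_image hfc hh
      fun U => hopen U.1 U.2.1.isOpen U.2.2⟩, fun g hg => hg.coe_eq_upperClosure_image hfc hh⟩

/-- Let `f : X → Y` be a continuous monotone map between Priestley spaces
and `h : ClU(Y) → ClU(X)`, `h V = f⁻¹ V`, the dual homomorphism on clopen up-sets. Then `h`
has a left adjoint iff for every open up-set `U ⊆ X` the set `↑f[U]` is open in `Y`; and in
that case any left adjoint `g` satisfies `g U = ↑f[U]` for every clopen up-set `U` of `X`. -/
theorem stmt_5 {X Y : Type*} [TopologicalSpace X] [PartialOrder X] [CompactSpace X]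
    [TopologicalSpace Y] [PartialOrder Y] [CompactSpace Y]
    (htodX : ∀ x y : X, ¬x ≤ y → ∃ U : Set X, IsClopen U ∧ IsUpperSet U ∧ x ∈ U ∧ y ∉ U)
    (htodY : ∀ x y : Y, ¬x ≤ y → ∃ U : Set Y, IsClopen U ∧ IsUpperSet U ∧ x ∈ U ∧ y ∉ U)
    (f : X → Y) (hfc : Continuous f) (hfm : Monotone f)
    (h : {V : Set Y // IsClopen V ∧ IsUpperSet V} → {U : Set X // IsClopen U ∧ IsUpperSet U})
    (hh : ∀ V, (h V).1 = f ⁻¹' V.1) :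
    ((∃ g : {U : Set X // IsClopen U ∧ IsUpperSet U} →
          {V : Set Y // IsClopen V ∧ IsUpperSet V}, GaloisConnection g h) ↔
        ∀ U : Set X, IsOpen U → IsUpperSet U →
          IsOpen (↑(upperClosure (f '' U)) : Set Y)) ∧
      ∀ g : {U : Set X // IsClopen U ∧ IsUpperSet U} →
          {V : Set Y // IsClopen V ∧ IsUpperSet V}, GaloisConnection g h →
        ∀ U, (g U).1 = ↑(upperClosure (f '' U.1)) :=
  stmt_5_general htodX htodY f hfc h hh
end

section
/- Let f : X → Y be a continuous monotone map between Priestley spaces. Then f is lower semi-open (the image of every open up-set of X is an open up-set of Y) if and only if f is bounded (the image of every up-set of X under f is an up-set of Y) and for every open up-set U of X, ↑f[U] is open in Y. -/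
/-!
If `f x ≤ b`, every clopen up-set `U ∋ x` meets the closed fibre `f ⁻¹' {b}`, because `f '' U` is
an up-set containing `f x`. These traces form a directed family of closed sets in a compact space,
so they have a common point `z`; as the clopen up-sets containing `x` cut out exactly `Ici x`, we
get `x ≤ z` and `f z = b`.
-/

open Set

section Priestley

variable {X : Type*} [TopologicalSpace X] [Preorder X] [CompactSpace X] [PriestleySpace X]

theorem exists_mem_le_of_forall_isClopen_isUpperSet_inter_nonempty {C : Set X} {x : X}
    (hC : IsClosed C)
    (hCU : ∀ U : Set X, IsClopen U → IsUpperSet U → x ∈ U → (U ∩ C).Nonempty) :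
    ∃ z ∈ C, x ≤ z := by
  let ι := {U : Set X // IsClopen U ∧ IsUpperSet U ∧ x ∈ U}
  have : Nonempty ι := ⟨⟨univ, isClopen_univ, isUpperSet_univ, mem_univ x⟩⟩
  let t : ι → Set X := fun U => U.1 ∩ C
  have ht_closed (i : ι) : IsClosed (t i) := i.2.1.isClosed.inter hC
  have ht_directed : Directed (· ⊇ ·) t := fun i j =>
    ⟨⟨i.1 ∩ j.1, i.2.1.inter j.2.1, i.2.2.1.inter j.2.2.1, i.2.2.2, j.2.2.2⟩,
      fun _ hz => ⟨hz.1.1, hz.2⟩, fun _ hz => ⟨hz.1.2, hz.2⟩⟩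
  obtain ⟨z, hz⟩ := IsCompact.nonempty_iInter_of_directed_nonempty_isCompact_isClosed t
    ht_directed (fun i => hCU i.1 i.2.1 i.2.2.1 i.2.2.2) (fun i => (ht_closed i).isCompact)
    ht_closed
  rw [mem_iInter] at hz
  refine ⟨z, (hz ⟨univ, isClopen_univ, isUpperSet_univ, mem_univ x⟩).2, ?_⟩
  by_contra hxz
  obtain ⟨U, hUc, hUu, hxU, hzU⟩ := exists_isClopen_upper_of_not_le hxz
  exact hzU (hz ⟨U, hUc, hUu, hxU⟩).1

theorem isUpperSet_image_of_forall_isClopen {Y : Type*} [TopologicalSpace Y] [T1Space Y]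
    [Preorder Y] {f : X → Y} (hf : Continuous f)
    (hfU : ∀ U : Set X, IsClopen U → IsUpperSet U → IsUpperSet (f '' U))
    {S : Set X} (hS : IsUpperSet S) : IsUpperSet (f '' S) := by
  rintro _ b hxb ⟨x, hxS, rfl⟩
  obtain ⟨z, hz, hxz⟩ := exists_mem_le_of_forall_isClopen_isUpperSet_inter_nonempty
    (isClosed_singleton.preimage hf) fun U hUc hUu hxU =>
      hfU U hUc hUu hxb (mem_image_of_mem f hxU)
  exact ⟨z, hS hxz hxS, hz⟩

end Priestley

theorem stmt_6_general {X Y : Type*} [TopologicalSpace X] [PartialOrder X] [CompactSpace X]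
    [TopologicalSpace Y] [PartialOrder Y]
    (htodX : ∀ x y : X, ¬x ≤ y → ∃ U : Set X, IsClopen U ∧ IsUpperSet U ∧ x ∈ U ∧ y ∉ U)
    (htodY : ∀ x y : Y, ¬x ≤ y → ∃ U : Set Y, IsClopen U ∧ IsUpperSet U ∧ x ∈ U ∧ y ∉ U)
    (f : X → Y) (hfc : Continuous f) :
    (∀ U : Set X, IsOpen U → IsUpperSet U → IsOpen (f '' U) ∧ IsUpperSet (f '' U)) ↔
      ((∀ S : Set X, IsUpperSet S → IsUpperSet (f '' S)) ∧
        ∀ U : Set X, IsOpen U → IsUpperSet U →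
          IsOpen (↑(upperClosure (f '' U)) : Set Y)) := by
  have : PriestleySpace X := ⟨htodX _ _⟩
  have : PriestleySpace Y := ⟨htodY _ _⟩
  constructor
  · intro h
    refine ⟨fun S => isUpperSet_image_of_forall_isClopen hfc
      fun U hUc hUu => (h U hUc.isOpen hUu).2, fun U hUo hUu => ?_⟩
    rw [(h U hUo hUu).2.upperClosure]
    exact (h U hUo hUu).1
  · rintro ⟨hbounded, hopen⟩ U hUo hUu
    have hfU := hbounded U hUu
    have := hopen U hUo hUu
    rw [hfU.upperClosure] at this
    exact ⟨this, hfU⟩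

/-- A continuous monotone map `f : X → Y` between Priestley spaces is lower
semi-open (images of open up-sets are open up-sets) iff `f` is bounded (images of up-sets
are up-sets) and `↑f[U]` is open for every open up-set `U ⊆ X`. -/
theorem stmt_6 {X Y : Type*} [TopologicalSpace X] [PartialOrder X] [CompactSpace X]
    [TopologicalSpace Y] [PartialOrder Y] [CompactSpace Y]
    (htodX : ∀ x y : X, ¬x ≤ y → ∃ U : Set X, IsClopen U ∧ IsUpperSet U ∧ x ∈ U ∧ y ∉ U)
    (htodY : ∀ x y : Y, ¬x ≤ y → ∃ U : Set Y, IsClopen U ∧ IsUpperSet U ∧ x ∈ U ∧ y ∉ U)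
    (f : X → Y) (hfc : Continuous f) (hfm : Monotone f) :
    (∀ U : Set X, IsOpen U → IsUpperSet U → IsOpen (f '' U) ∧ IsUpperSet (f '' U)) ↔
      ((∀ S : Set X, IsUpperSet S → IsUpperSet (f '' S)) ∧
        ∀ U : Set X, IsOpen U → IsUpperSet U →
          IsOpen (↑(upperClosure (f '' U)) : Set Y)) :=
  stmt_6_general htodX htodY f hfc
end

section
/- Let h : A → B be a lattice homomorphism between distributive lattices and f : Spec B → Spec A its Priestley dual. Then h is Frobenius (for every a ∈ A, the lax square of p_a : A → ↓a, h, p_{h(a)} : B → ↓h(a), and the restriction of h has the interpolation property) if and only if f is bounded (the direct image under f of every up-set of Spec B is an up-set of Spec A). -/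
/-- A point of the Priestley dual of a bounded lattice `A`: a bounded lattice
homomorphism `A → 2`, encoded as a `Bool`-valued function. -/
def IsSpecPoint {A : Type*} [Lattice A] [BoundedOrder A] (x : A → Bool) : Prop :=
  (∀ a b : A, x (a ⊓ b) = (x a && x b)) ∧ (∀ a b : A, x (a ⊔ b) = (x a || x b)) ∧
    x ⊤ = true ∧ x ⊥ = false

/-- The Priestley dual space of a bounded lattice `A`, with the pointwise order
(and, as a subspace of `A → Bool`, the Priestley topology). -/
abbrev SpecL (A : Type*) [Lattice A] [BoundedOrder A] : Type _ :=
  {x : A → Bool // IsSpecPoint x}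

/-!
A point of `SpecL B` is a prime filter of `B`, and boundedness of `f = (· ∘ h)` says: whenever
`x ∘ h ≤ y`, some `x' ≥ x` has `x' ∘ h = y`. Such an `x'` is a prime filter containing `x` and
`h(y)` and missing `h(¬y)`; by the prime filter theorem it exists unless some `h a ⊓ b` with
`y a`, `x b` lies below some `h c` with `¬ y c`, and the Frobenius condition for `a`, `a ⊓ c`, `b`
excludes this. Conversely, if `h a ⊓ b ≤ h c` had no interpolant `z`, separation would give a `y`
with `y a`, `¬ y c` and `y z` whenever `b ≤ h z`, then an `x ∋ b` with `x ∘ h ≤ y`; lifting `y` to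
some `x' ≥ x` puts `h a ⊓ b`, hence `h c`, in `x'`, i.e. `y c`.
-/

open Order
open scoped SetFamily

theorem InfClosed.infs {P : Type*} [Lattice P] {s t : Set P} (hs : InfClosed s)
    (ht : InfClosed t) : InfClosed (s ⊼ t) := by
  rintro _ ⟨a, ha, b, hb, rfl⟩ _ ⟨c, hc, d, hd, rfl⟩
  rw [inf_inf_inf_comm]
  exact Set.inf_mem_infs (hs ha hc) (ht hb hd)

theorem SupClosed.isIdeal_lowerClosure {P : Type*} [SemilatticeSup P] {s : Set P}
    (hs : SupClosed s) (hne : s.Nonempty) : IsIdeal (lowerClosure s : Set P) := by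
  refine ⟨(lowerClosure s).lower, hne.mono subset_lowerClosure, ?_⟩
  rintro _ ⟨i, hi, hai⟩ _ ⟨j, hj, hbj⟩
  exact ⟨i ⊔ j, ⟨i ⊔ j, hs hi hj, le_rfl⟩, hai.trans le_sup_left, hbj.trans le_sup_right⟩

theorem InfClosed.isPFilter_upperClosure {P : Type*} [Lattice P] {s : Set P}
    (hs : InfClosed s) (hne : s.Nonempty) : IsPFilter (upperClosure s : Set P) :=
  hs.dual.isIdeal_lowerClosure hne

theorem infClosed_Ici {P : Type*} [SemilatticeInf P] (a : P) : InfClosed (Set.Ici a) :=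
  fun _ hx _ hy => le_inf hx hy

theorem forall_isUpperSet_image_iff {α β : Type*} [Preorder α] [Preorder β] {f : α → β} :
    (∀ S : Set α, IsUpperSet S → IsUpperSet (f '' S)) ↔
      ∀ x y, f x ≤ y → ∃ x', x ≤ x' ∧ f x' = y := by
  refine ⟨fun H x y hxy => H _ (isUpperSet_Ici x) hxy ⟨x, le_rfl, rfl⟩, ?_⟩
  rintro H S hS y₁ y₂ hy ⟨x, hxS, rfl⟩
  obtain ⟨x', hxx', rfl⟩ := H x y₂ hy
  exact ⟨x', hS hxx' hxS, rfl⟩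

namespace IsSpecPoint

variable {A B : Type*} [Lattice A] [BoundedOrder A] {x : A → Bool}

theorem monotone (hx : IsSpecPoint x) : Monotone x := fun a b hab => by
  have := Bool.left_le_or (x a) (x b)
  rwa [← hx.2.1, sup_eq_right.2 hab] at this

theorem apply_top (hx : IsSpecPoint x) : x ⊤ = true := hx.2.2.1

theorem apply_bot (hx : IsSpecPoint x) : x ⊥ = false := hx.2.2.2

theorem apply_eq_true_of_le (hx : IsSpecPoint x) {a b : A} (hab : a ≤ b) (ha : x a = true) :
    x b = true :=
  Bool.le_iff_imp.1 (hx.monotone hab) ha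

theorem infClosed (hx : IsSpecPoint x) : InfClosed {a | x a = true} := fun a ha b hb => by
  simp_all [hx.1 a b]

theorem supClosed (hx : IsSpecPoint x) : SupClosed {a | x a = false} := fun a ha b hb => by
  simp_all [hx.2.1 a b]

theorem comp [Lattice B] [BoundedOrder B] (hx : IsSpecPoint x) (h : BoundedLatticeHom B A) :
    IsSpecPoint (x ∘ h) := by
  refine ⟨fun a b => ?_, fun a b => ?_, ?_, ?_⟩ <;>
    simp only [Function.comp_apply, map_inf, map_sup, map_top, map_bot, hx.1, hx.2.1, hx.2.2.1,
      hx.2.2.2]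

end IsSpecPoint

open Classical in
theorem Order.Ideal.IsPrime.isSpecPoint {A : Type*} [Lattice A] [BoundedOrder A] {J : Ideal A}
    (hJ : J.IsPrime) : IsSpecPoint fun a => decide (a ∉ J) := by
  refine ⟨fun a b => ?_, fun a b => ?_, ?_, ?_⟩
  · have : a ⊓ b ∈ J ↔ a ∈ J ∨ b ∈ J :=
      ⟨hJ.mem_or_mem, fun hab => hab.elim (J.lower inf_le_left) (J.lower inf_le_right)⟩
    simp [this]
  · simp [Ideal.sup_mem_iff]
  · simp [hJ.top_notMem]
  · simp [J.bot_mem]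

namespace SpecL

variable {A B : Type*} [Lattice A] [BoundedOrder A]

theorem le_iff {x y : SpecL A} : x ≤ y ↔ ∀ a, x.1 a = true → y.1 a = true := by
  simp only [← Subtype.coe_le_coe, Pi.le_def, Bool.le_iff_imp]

def comap [Lattice B] [BoundedOrder B] (h : BoundedLatticeHom A B) (x : SpecL B) : SpecL A :=
  ⟨x.1 ∘ h, x.2.comp h⟩

@[simp]
theorem comap_apply [Lattice B] [BoundedOrder B] (h : BoundedLatticeHom A B) (x : SpecL B) (a : A) :
    (comap h x).1 a = x.1 (h a) :=
  rfl

theorem exists_separating [DistribLattice B] [BoundedOrder B] {F I : Set B} (hF : InfClosed F)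
    (hI : SupClosed I) (hFne : F.Nonempty) (hIne : I.Nonempty) (hFI : ∀ f ∈ F, ∀ i ∈ I, ¬f ≤ i) :
    ∃ x : SpecL B, (∀ f ∈ F, x.1 f = true) ∧ ∀ i ∈ I, x.1 i = false := by
  classical
  have hdisj : Disjoint ((hF.isPFilter_upperClosure hFne).toPFilter : Set B)
      (hI.isIdeal_lowerClosure hIne).toIdeal := by
    rw [Set.disjoint_left]
    rintro w ⟨f, hf, hfw⟩ ⟨i, hi, hwi⟩
    exact hFI f hf i hi (hfw.trans hwi)
  obtain ⟨J, hJ, hIJ, hFJ⟩ := DistribLattice.prime_ideal_of_disjoint_filter_ideal hdisj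
  refine ⟨⟨_, hJ.isSpecPoint⟩, fun f hf => ?_, fun i hi => ?_⟩
  · simpa using Set.disjoint_left.1 hFJ (subset_upperClosure hf)
  · simpa using hIJ (subset_lowerClosure hi)

end SpecL

/-- With `p_a z = a ⊓ z`, this is the interpolation property of the lax square formed by `p_a`,
`p_{h a}`, `h` and its restriction `↓a → ↓(h a)`, for every `a`. -/
def IsFrobenius {A B : Type*} [Lattice A] [BoundedOrder A] [Lattice B] [BoundedOrder B]
    (h : BoundedLatticeHom A B) : Prop :=
  ∀ (a c : A) (b : B), c ≤ a → h a ⊓ b ≤ h c → ∃ z : A, b ≤ h z ∧ a ⊓ z ≤ c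

theorem IsFrobenius.exists_of_inf_le {A B : Type*} [Lattice A] [BoundedOrder A] [Lattice B]
    [BoundedOrder B] {h : BoundedLatticeHom A B} (H : IsFrobenius h) {a c : A} {b : B}
    (hle : h a ⊓ b ≤ h c) : ∃ z, b ≤ h z ∧ a ⊓ z ≤ c := by
  obtain ⟨z, hbz, hz⟩ := H a (a ⊓ c) b inf_le_left (by rw [map_inf]; exact le_inf inf_le_left hle)
  exact ⟨z, hbz, hz.trans inf_le_right⟩

section

variable {A B : Type*} [Lattice A] [BoundedOrder A] [DistribLattice B] [BoundedOrder B]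
  {h : BoundedLatticeHom A B}

theorem IsFrobenius.exists_le_comap_eq (H : IsFrobenius h) {x : SpecL B} {y : SpecL A}
    (hxy : SpecL.comap h x ≤ y) : ∃ x', x ≤ x' ∧ SpecL.comap h x' = y := by
  have hdisj : ∀ f ∈ h '' {a | y.1 a = true} ⊼ {b | x.1 b = true},
      ∀ i ∈ h '' {c | y.1 c = false}, ¬f ≤ i := by
    rintro _ ⟨_, ⟨a, hya, rfl⟩, b, hxb, rfl⟩ _ ⟨c, hyc, rfl⟩ hle
    obtain ⟨z, hbz, hazc⟩ := H.exists_of_inf_le hle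
    have hyz : y.1 z = true := SpecL.le_iff.1 hxy z (x.2.apply_eq_true_of_le hbz hxb)
    simp [y.2.apply_eq_true_of_le hazc (y.2.infClosed hya hyz)] at hyc
  obtain ⟨x', hx'F, hx'I⟩ := SpecL.exists_separating
    ((y.2.infClosed.image h).infs x.2.infClosed) (y.2.supClosed.image h)
    ⟨_, Set.inf_mem_infs (Set.mem_image_of_mem h y.2.apply_top) x.2.apply_top⟩
    ⟨_, Set.mem_image_of_mem h y.2.apply_bot⟩ hdisj
  refine ⟨x', SpecL.le_iff.2 fun b hb => ?_, Subtype.ext (funext fun a => ?_)⟩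
  · simpa using hx'F _ (Set.inf_mem_infs (Set.mem_image_of_mem h y.2.apply_top) hb)
  · cases hya : y.1 a
    · exact hx'I _ (Set.mem_image_of_mem h hya)
    · simpa using hx'F _ (Set.inf_mem_infs (Set.mem_image_of_mem h hya) x.2.apply_top)

theorem SpecL.exists_apply_eq_true_comap_le {y : SpecL A} {b : B}
    (hb : ∀ v, b ≤ h v → y.1 v = true) : ∃ x : SpecL B, x.1 b = true ∧ SpecL.comap h x ≤ y := by
  obtain ⟨x, hxb, hxI⟩ := SpecL.exists_separating (infClosed_singleton (a := b))
    (y.2.supClosed.image h) ⟨b, rfl⟩ ⟨_, Set.mem_image_of_mem h y.2.apply_bot⟩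
    (by rintro _ rfl _ ⟨v, hv, rfl⟩ hbv; simp [hb v hbv] at hv)
  refine ⟨x, hxb b rfl, SpecL.le_iff.2 fun a hxa => ?_⟩
  by_contra hya
  simp [hxI _ (Set.mem_image_of_mem h (Bool.eq_false_iff.2 hya))] at hxa

end

theorem isFrobenius_of_exists_le_comap_eq {A B : Type*} [DistribLattice A] [BoundedOrder A]
    [DistribLattice B] [BoundedOrder B] {h : BoundedLatticeHom A B}
    (H : ∀ (x : SpecL B) (y : SpecL A), SpecL.comap h x ≤ y →
      ∃ x', x ≤ x' ∧ SpecL.comap h x' = y) :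
    IsFrobenius h := by
  intro a c b _ hle
  by_contra! hne
  obtain ⟨y, hyF, hyc⟩ := SpecL.exists_separating
    (infClosed_singleton.infs ((infClosed_Ici b).preimage h)) (supClosed_singleton (a := c))
    ⟨_, Set.inf_mem_infs rfl (show b ≤ h ⊤ by simp)⟩ ⟨c, rfl⟩
    (by rintro _ ⟨_, rfl, z, hz, rfl⟩ _ rfl; exact hne z hz)
  have hya : y.1 a = true := by simpa using hyF _ (Set.inf_mem_infs rfl (show b ≤ h ⊤ by simp))
  obtain ⟨x, hxb, hxy⟩ := SpecL.exists_apply_eq_true_comap_le (h := h) fun v hv =>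
    y.2.apply_eq_true_of_le inf_le_right (hyF _ (Set.inf_mem_infs rfl hv))
  obtain ⟨x', hxx', rfl⟩ := H x y hxy
  have hx'c : x'.1 (h c) = true :=
    x'.2.apply_eq_true_of_le hle (x'.2.infClosed hya (SpecL.le_iff.1 hxx' b hxb))
  simp [hx'c] at hyc

/-- A homomorphism `h : A → B` of bounded distributive lattices is Frobenius
(each square with the projections `p_a` has the interpolation property) iff its Priestley
dual `f : Spec B → Spec A`, `f x = x ∘ h`, is bounded (direct images of up-sets are
up-sets). -/
theorem stmt_7 {A B : Type*} [DistribLattice A] [BoundedOrder A]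
    [DistribLattice B] [BoundedOrder B]
    (h : BoundedLatticeHom A B)
    (f : SpecL B → SpecL A)
    (hf : ∀ (x : SpecL B) (a : A), (f x).1 a = x.1 (h a)) :
    (∀ (a c : A) (b : B), c ≤ a → h a ⊓ b ≤ h c → ∃ z : A, b ≤ h z ∧ a ⊓ z ≤ c) ↔
      ∀ S : Set (SpecL B), IsUpperSet S → IsUpperSet (f '' S) := by
  obtain rfl : f = SpecL.comap h := funext fun x => Subtype.ext (funext (hf x))
  rw [forall_isUpperSet_image_iff]
  exact ⟨fun H _ _ => IsFrobenius.exists_le_comap_eq H, isFrobenius_of_exists_le_comap_eq⟩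
end

section
/- Let a cofiltered diagram in the category of compact ordered spaces consist of commutative squares u_i : A_i → B_i, v_i : A_i → C_i, f_i : B_i → D_i, g_i : C_i → D_i with f_i ∘ u_i = g_i ∘ v_i, each having the interpolation property (whenever f_i(b) ≤ g_i(c) there is a ∈ A_i with b ≤ u_i(a) and v_i(a) ≤ c). Then the limit square, with A = lim A_i, B = lim B_i, C = lim C_i, D = lim D_i, also has the interpolation property. -/
open CategoryTheory

/-- In the category of compact ordered spaces (compact spaces with a closed
partial order, continuous monotone maps), a cofiltered limit of commutative squares each
having the interpolation property again has the interpolation property, where limits are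
computed as sets of compatible families (sections). -/
theorem stmt_9 {J : Type*} [Category J] [IsCofiltered J]
    (FA FB FC FD : J ⥤ TopCat)
    [∀ j, PartialOrder (FA.obj j)] [∀ j, PartialOrder (FB.obj j)]
    [∀ j, PartialOrder (FC.obj j)] [∀ j, PartialOrder (FD.obj j)]
    [∀ j, CompactSpace (FA.obj j)] [∀ j, CompactSpace (FB.obj j)]
    [∀ j, CompactSpace (FC.obj j)] [∀ j, CompactSpace (FD.obj j)]
    (hclA : ∀ j, IsClosed {p : FA.obj j × FA.obj j | p.1 ≤ p.2})
    (hclB : ∀ j, IsClosed {p : FB.obj j × FB.obj j | p.1 ≤ p.2})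
    (hclC : ∀ j, IsClosed {p : FC.obj j × FC.obj j | p.1 ≤ p.2})
    (hclD : ∀ j, IsClosed {p : FD.obj j × FD.obj j | p.1 ≤ p.2})
    (hmA : ∀ {i j : J} (φ : i ⟶ j), Monotone (FA.map φ))
    (hmB : ∀ {i j : J} (φ : i ⟶ j), Monotone (FB.map φ))
    (hmC : ∀ {i j : J} (φ : i ⟶ j), Monotone (FC.map φ))
    (hmD : ∀ {i j : J} (φ : i ⟶ j), Monotone (FD.map φ))
    (u : FA ⟶ FB) (v : FA ⟶ FC) (f : FB ⟶ FD) (g : FC ⟶ FD)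
    (hmu : ∀ j, Monotone (u.app j)) (hmv : ∀ j, Monotone (v.app j))
    (hmf : ∀ j, Monotone (f.app j)) (hmg : ∀ j, Monotone (g.app j))
    (hcomm : ∀ (j : J) (a : FA.obj j), f.app j (u.app j a) = g.app j (v.app j a))
    (hinterp : ∀ (j : J) (b : FB.obj j) (c : FC.obj j), f.app j b ≤ g.app j c →
      ∃ a : FA.obj j, b ≤ u.app j a ∧ v.app j a ≤ c) :
    ∀ (sb : ∀ j, FB.obj j), (∀ {i j : J} (φ : i ⟶ j), FB.map φ (sb i) = sb j) →
    ∀ (sc : ∀ j, FC.obj j), (∀ {i j : J} (φ : i ⟶ j), FC.map φ (sc i) = sc j) →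
      (∀ j, f.app j (sb j) ≤ g.app j (sc j)) →
      ∃ sa : ∀ j, FA.obj j, (∀ {i j : J} (φ : i ⟶ j), FA.map φ (sa i) = sa j) ∧
        (∀ j, sb j ≤ u.app j (sa j)) ∧ ∀ j, v.app j (sa j) ≤ sc j := by
  intro sb hsb sc hsc hle
  -- the interpolation sets
  let S : ∀ j, Set (FA.obj j) := fun j =>
    {a | sb j ≤ u.app j a ∧ v.app j a ≤ sc j}
  have hSclosed : ∀ j, IsClosed (S j) := by
    intro j
    have h1 : IsClosed ((fun a : FA.obj j => ((sb j, u.app j a) : FB.obj j × FB.obj j)) ⁻¹'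
        {p : FB.obj j × FB.obj j | p.1 ≤ p.2}) :=
      (hclB j).preimage (continuous_const.prodMk (u.app j).hom.continuous)
    have h2 : IsClosed ((fun a : FA.obj j => ((v.app j a, sc j) : FC.obj j × FC.obj j)) ⁻¹'
        {p : FC.obj j × FC.obj j | p.1 ≤ p.2}) :=
      (hclC j).preimage ((v.app j).hom.continuous.prodMk continuous_const)
    exact h1.inter h2
  have hSnonempty : ∀ j, (S j).Nonempty := fun j => hinterp j (sb j) (sc j) (hle j)
  have hSmap : ∀ {i j : J} (φ : i ⟶ j), Set.MapsTo (FA.map φ) (S i) (S j) := by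
    intro i j φ a ha
    constructor
    · have : FB.map φ (sb i) ≤ FB.map φ (u.app i a) := hmB φ ha.1
      rwa [hsb φ, ← comp_apply, ← u.naturality φ,
        comp_apply] at this
    · have : FC.map φ (v.app i a) ≤ FC.map φ (sc i) := hmC φ ha.2
      rwa [hsc φ, ← comp_apply, ← v.naturality φ,
        comp_apply] at this
  -- each space is T2 since its order is closed
  have hT2 : ∀ j, T2Space (FA.obj j) := by
    intro j
    rw [t2_iff_isClosed_diagonal]
    have : (Set.diagonal (FA.obj j)) =
        {p : FA.obj j × FA.obj j | p.1 ≤ p.2} ∩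
        {p : FA.obj j × FA.obj j | p.2 ≤ p.1} := by
      ext p
      constructor
      · rintro h; exact ⟨le_of_eq h, ge_of_eq h⟩
      · rintro ⟨h1, h2⟩; exact le_antisymm h1 h2
    rw [this]
    exact (hclA j).inter ((hclA j).preimage continuous_swap)
  classical
  -- compactness argument in the product space
  let X := ∀ j, FA.obj j
  let E : Finset (Σ' i j : J, i ⟶ j) → Set X := fun D =>
    {x | (∀ j, x j ∈ S j) ∧ ∀ t ∈ D, FA.map t.2.2 (x t.1) = x t.2.1}
  have hEdir : Directed (· ⊇ ·) E := by
    intro D1 D2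
    refine ⟨D1 ∪ D2, ?_, ?_⟩
    · intro x hx
      exact ⟨hx.1, fun t ht => hx.2 t (Finset.mem_union_left _ ht)⟩
    · intro x hx
      exact ⟨hx.1, fun t ht => hx.2 t (Finset.mem_union_right _ ht)⟩
  have hEclosed : ∀ D, IsClosed (E D) := by
    intro D
    have h0 : IsClosed {x : X | ∀ j, x j ∈ S j} := by
      have : {x : X | ∀ j, x j ∈ S j} = Set.pi Set.univ (fun j => S j) := by
        ext x; exact Set.mem_univ_pi.symm
      rw [this]
      exact isClosed_set_pi fun j _ => hSclosed j
    have h1 : IsClosed {x : X | ∀ t ∈ D, FA.map t.2.2 (x t.1) = x t.2.1} := by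
      have : {x : X | ∀ t ∈ D, FA.map t.2.2 (x t.1) = x t.2.1} =
          ⋂ t ∈ D, {x : X | FA.map t.2.2 (x t.1) = x t.2.1} := by
        ext x; simp
      rw [this]
      refine isClosed_biInter fun t _ => ?_
      have := hT2 t.2.1
      exact isClosed_eq ((FA.map t.2.2).hom.continuous.comp (continuous_apply t.1))
        (continuous_apply t.2.1)
    exact h0.inter h1
  have hEcompact : ∀ D, IsCompact (E D) := fun D => (hEclosed D).isCompact
  have hEnonempty : ∀ D, (E D).Nonempty := by
    intro D
    -- the finite set of objects appearing in `D`
    let O : Finset J := D.image (fun t => t.1) ∪ D.image (fun t => t.2.1)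
    let H : Finset (Σ' (X Y : J) (_ : X ∈ O) (_ : Y ∈ O), X ⟶ Y) :=
      D.attach.image fun t =>
        ⟨t.1.1, t.1.2.1,
          Finset.mem_union_left _ (Finset.mem_image_of_mem _ t.2),
          Finset.mem_union_right _ (Finset.mem_image_of_mem _ t.2), t.1.2.2⟩
    let Z := IsCofiltered.inf O H
    obtain ⟨a, ha⟩ := hSnonempty Z
    let x : X := fun j =>
      if h : j ∈ O then FA.map (IsCofiltered.infTo O H h) a
      else (hSnonempty j).choose
    have hx1 : ∀ j, x j ∈ S j := by
      intro j
      by_cases h : j ∈ O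
      · simpa [x, h] using hSmap (IsCofiltered.infTo O H h) ha
      · simpa [x, h] using (hSnonempty j).choose_spec
    refine ⟨x, hx1, ?_⟩
    intro t ht
    have m1 : t.1 ∈ O := Finset.mem_union_left _ (Finset.mem_image_of_mem _ ht)
    have m2 : t.2.1 ∈ O := Finset.mem_union_right _ (Finset.mem_image_of_mem _ ht)
    have mH : (⟨t.1, t.2.1, m1, m2, t.2.2⟩ :
        Σ' (X Y : J) (_ : X ∈ O) (_ : Y ∈ O), X ⟶ Y) ∈ H := by
      apply Finset.mem_image_of_mem _ (Finset.mem_attach D ⟨t, ht⟩)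
    have hcomm' := IsCofiltered.infTo_commutes O H m1 m2 mH
    have : FA.map (IsCofiltered.infTo O H m1 ≫ t.2.2) a =
        FA.map (IsCofiltered.infTo O H m2) a := by rw [hcomm']
    rw [FA.map_comp] at this
    simp only [x, dif_pos m1, dif_pos m2]
    exact this
  obtain ⟨x, hx⟩ :=
    IsCompact.nonempty_iInter_of_directed_nonempty_isCompact_isClosed E hEdir
      hEnonempty hEcompact hEclosed
  have hxE : ∀ D, x ∈ E D := by
    intro D
    exact Set.mem_iInter.mp hx D
  refine ⟨x, fun {i j} φ => ?_, fun j => ((hxE ∅).1 j).1, fun j => ((hxE ∅).1 j).2⟩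
  exact (hxE {⟨i, j, φ⟩}).2 ⟨i, j, φ⟩ (Finset.mem_singleton_self _)
end

section
/- In the category of compact ordered spaces, a cofiltered limit of bounded morphisms is bounded: if (f_i : A_i → B_i) is a cofiltered diagram of morphisms each of which is bounded, then the limit morphism f : lim A_i → lim B_i is bounded. -/
open CategoryTheory

/-- In the category of compact ordered spaces, a cofiltered limit of
bounded morphisms is bounded, where limits are computed as sets of compatible families
(sections) and a monotone map `f` is bounded iff whenever `f a ≤ b` there is `a' ≥ a`
with `f a' = b`. -/
theorem stmt_10 {J : Type*} [Category J] [IsCofiltered J]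
    (FA FB : J ⥤ TopCat)
    [∀ j, PartialOrder (FA.obj j)] [∀ j, PartialOrder (FB.obj j)]
    [∀ j, CompactSpace (FA.obj j)] [∀ j, CompactSpace (FB.obj j)]
    (hclA : ∀ j, IsClosed {p : FA.obj j × FA.obj j | p.1 ≤ p.2})
    (hclB : ∀ j, IsClosed {p : FB.obj j × FB.obj j | p.1 ≤ p.2})
    (hmA : ∀ {i j : J} (φ : i ⟶ j), Monotone (FA.map φ))
    (hmB : ∀ {i j : J} (φ : i ⟶ j), Monotone (FB.map φ))
    (f : FA ⟶ FB)
    (hmf : ∀ j, Monotone (f.app j))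
    (hbdd : ∀ (j : J) (a : FA.obj j) (b : FB.obj j), f.app j a ≤ b →
      ∃ a' : FA.obj j, a ≤ a' ∧ f.app j a' = b) :
    ∀ (sa : ∀ j, FA.obj j), (∀ {i j : J} (φ : i ⟶ j), FA.map φ (sa i) = sa j) →
    ∀ (sb : ∀ j, FB.obj j), (∀ {i j : J} (φ : i ⟶ j), FB.map φ (sb i) = sb j) →
      (∀ j, f.app j (sa j) ≤ sb j) →
      ∃ sa' : ∀ j, FA.obj j, (∀ {i j : J} (φ : i ⟶ j), FA.map φ (sa' i) = sa' j) ∧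
        (∀ j, sa j ≤ sa' j) ∧ ∀ j, f.app j (sa' j) = sb j := by
  intro sa hsa sb hsb hle
  classical
  -- Each space is Hausdorff since the order is closed
  have hT2A : ∀ j, T2Space (FA.obj j) := by
    intro j
    rw [t2_iff_isClosed_diagonal]
    have h2 : IsClosed {p : FA.obj j × FA.obj j | p.2 ≤ p.1} :=
      (hclA j).preimage (continuous_swap : Continuous (Prod.swap :
        FA.obj j × FA.obj j → FA.obj j × FA.obj j))
    have h3 := (hclA j).inter h2
    convert h3 using 1
    ext p
    simp [Set.diagonal, le_antisymm_iff]
  have hT2B : ∀ j, T2Space (FB.obj j) := by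
    intro j
    rw [t2_iff_isClosed_diagonal]
    have h2 : IsClosed {p : FB.obj j × FB.obj j | p.2 ≤ p.1} :=
      (hclB j).preimage (continuous_swap : Continuous (Prod.swap :
        FB.obj j × FB.obj j → FB.obj j × FB.obj j))
    have h3 := (hclB j).inter h2
    convert h3 using 1
    ext p
    simp [Set.diagonal, le_antisymm_iff]
  -- the closed constraint sets
  let ι := J ⊕ (Σ' (i j : J), i ⟶ j)
  let Z : ι → Set (∀ j, FA.obj j) := fun x =>
    match x with
    | .inl j => {s | sa j ≤ s j ∧ f.app j (s j) = sb j}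
    | .inr ⟨i, j, φ⟩ => {s | FA.map φ (s i) = s j}
  have hZc : ∀ x, IsClosed (Z x) := by
    rintro (j | ⟨i, j, φ⟩)
    · have h1 : IsClosed {s : ∀ j, FA.obj j | sa j ≤ s j} :=
        (hclA j).preimage (by fun_prop :
          Continuous (fun s : ∀ j, FA.obj j => ((sa j, s j) : FA.obj j × FA.obj j)))
      have h2 : IsClosed {s : ∀ j, FA.obj j | f.app j (s j) = sb j} := by
        haveI := hT2B j
        exact isClosed_eq ((f.app j).hom.continuous.comp (continuous_apply j)) continuous_const
      exact h1.inter h2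
    · haveI := hT2A j
      exact isClosed_eq ((FA.map φ).hom.continuous.comp (continuous_apply i)) (continuous_apply j)
  -- finite intersection property
  have hfin : ∀ t : Finset ι, (Set.univ ∩ ⋂ x ∈ t, Z x).Nonempty := by
    intro t
    rw [Set.univ_inter]
    let obs : ι → Finset J := fun x =>
      match x with
      | .inl j => {j}
      | .inr ⟨i, j, _⟩ => {i, j}
    let O : Finset J := t.biUnion obs
    have memO : ∀ {x : ι}, x ∈ t → ∀ {j : J}, j ∈ obs x → j ∈ O := by
      intro x hx j hj
      exact Finset.mem_biUnion.mpr ⟨x, hx, hj⟩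
    let emb : ∀ x : ι, x ∈ t → Finset (Σ' (X Y : J) (_ : X ∈ O) (_ : Y ∈ O), X ⟶ Y) :=
      fun x hx =>
        match x, hx with
        | .inl _, _ => ∅
        | .inr ⟨i, j, φ⟩, hx =>
          {⟨i, j, memO hx (by simp [obs]), memO hx (by simp [obs]), φ⟩}
    let H : Finset (Σ' (X Y : J) (_ : X ∈ O) (_ : Y ∈ O), X ⟶ Y) :=
      t.attach.biUnion fun x => emb x.1 x.2
    obtain ⟨S, T, hT⟩ := IsCofiltered.inf_exists O H
    obtain ⟨a', ha1', ha2'⟩ := hbdd S (sa S) (sb S) (hle S)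
    refine ⟨fun j => if h : j ∈ O then FA.map (T h) a' else sa j, ?_⟩
    simp only [Set.mem_iInter]
    rintro (j | ⟨i, j, φ⟩) hx
    · have hj : j ∈ O := memO hx (by simp [obs])
      constructor
      · simp only [dif_pos hj]
        rw [← hsa (T hj)]
        exact hmA (T hj) ha1'
      · simp only [dif_pos hj]
        have hnat : f.app j (FA.map (T hj) a') = FB.map (T hj) (f.app S a') :=
          ConcreteCategory.congr_hom (f.naturality (T hj)) a'
        rw [hnat, ha2', hsb (T hj)]
    · have hi : i ∈ O := memO hx (by simp [obs])
      have hj : j ∈ O := memO hx (by simp [obs])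
      show (FA.map φ) (if h : i ∈ O then (FA.map (T h)) a' else sa i) =
        (if h : j ∈ O then (FA.map (T h)) a' else sa j)
      rw [dif_pos hi, dif_pos hj]
      have hmem : (⟨i, j, hi, hj, φ⟩ : Σ' (X Y : J) (_ : X ∈ O) (_ : Y ∈ O), X ⟶ Y) ∈ H := by
        apply Finset.mem_biUnion.mpr
        exact ⟨⟨Sum.inr ⟨i, j, φ⟩, hx⟩, Finset.mem_attach _ _, by simp [emb]⟩
      have := hT hi hj hmem
      calc FA.map φ (FA.map (T hi) a') = FA.map (T hi ≫ φ) a' := by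
            rw [FA.map_comp]; rfl
        _ = FA.map (T hj) a' := by rw [this]
  obtain ⟨s, hs⟩ := isCompact_univ.inter_iInter_nonempty Z hZc hfin
  rw [Set.univ_inter, Set.mem_iInter] at hs
  refine ⟨s, ?_, ?_, ?_⟩
  · intro i j φ
    exact hs (Sum.inr ⟨i, j, φ⟩)
  · intro j
    exact (hs (Sum.inl j)).1
  · intro j
    exact (hs (Sum.inl j)).2
end

section
/- Boundedness is preserved by oplax colimits of posets: let I be a small category, (X_i) and (Y_i) be I-indexed diagrams of posets, and (F_i : X_i → Y_i) a natural transformation with each F_i bounded. Let X be the poset whose elements are pairs (i, x) with x ∈ X_i, where (i,x) ≤ (j,y) iff there is a morphism f : i → j with X_f(x) ≤ y, and similarly Y; let F(i,x) = (i, F_i(x)). Then F : X → Y is bounded. -/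
open CategoryTheory

universe u v w

/-- Boundedness is preserved by oplax colimits of posets: given
`I`-indexed diagrams of posets `X`, `Y` (with monotone transition maps) and a natural
transformation `F` with every component bounded, the induced map between the oplax
colimits (pairs `(i, x)` with `(i,x) ≤ (j,y)` iff some `f : i ⟶ j` has `X.map f x ≤ y`)
is bounded. -/
theorem stmt_11 {I : Type u} [Category.{v} I]
    (X Y : I ⥤ Type w)
    [∀ i, PartialOrder (X.obj i)] [∀ i, PartialOrder (Y.obj i)]
    (hX : ∀ {i j : I} (f : i ⟶ j), Monotone (X.map f))
    (hY : ∀ {i j : I} (f : i ⟶ j), Monotone (Y.map f))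
    (F : X ⟶ Y)
    (hFm : ∀ i, Monotone (F.app i))
    (hFb : ∀ (i : I) (x : X.obj i) (y : Y.obj i), F.app i x ≤ y →
      ∃ x' : X.obj i, x ≤ x' ∧ F.app i x' = y) :
    ∀ (i : I) (x : X.obj i) (j : I) (y : Y.obj j),
      (∃ f : i ⟶ j, Y.map f (F.app i x) ≤ y) →
      ∃ x' : X.obj j, (∃ g : i ⟶ j, X.map g x ≤ x') ∧ F.app j x' = y := by
  rintro i x j y ⟨f, hf⟩
  have hnat : Y.map f (F.app i x) = F.app j (X.map f x) := (FunctorToTypes.naturality (F := X) (G := Y) F f x).symm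
  obtain ⟨x', hx', hFx'⟩ := hFb j (X.map f x) y (hnat ▸ hf)
  exact ⟨x', ⟨f, hx'⟩, hFx'⟩
end

section
/- The interpolation property is preserved by oplax colimits of posets: given I-indexed diagrams of posets (A_i), (B_i), (C_i), (D_i) with natural transformations forming, for each i, a lax square u_i : A_i → B_i, v_i : A_i → C_i, f_i : B_i → D_i, g_i : C_i → D_i with f_i ∘ u_i ≤ g_i ∘ v_i and the interpolation property, the induced lax square between the oplax colimits also has the interpolation property. -/
open CategoryTheory

universe u v w

/-- The interpolation property is preserved by oplax colimits of posets:
given `I`-indexed diagrams of posets `A`, `B`, `C`, `D` (with monotone transition maps) and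
natural transformations `u, v, f, g` forming pointwise lax squares `f ∘ u ≤ g ∘ v` with the
interpolation property, the induced lax square between the oplax colimits (pairs `(i, x)`,
with `(i,x) ≤ (j,y)` iff some `h : i ⟶ j` has `map h x ≤ y`) has the interpolation
property. -/
theorem stmt_12 {I : Type u} [Category.{v} I]
    (A B C D : I ⥤ Type w)
    [∀ i, PartialOrder (A.obj i)] [∀ i, PartialOrder (B.obj i)]
    [∀ i, PartialOrder (C.obj i)] [∀ i, PartialOrder (D.obj i)]
    (hA : ∀ {i j : I} (φ : i ⟶ j), Monotone (A.map φ))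
    (hB : ∀ {i j : I} (φ : i ⟶ j), Monotone (B.map φ))
    (hC : ∀ {i j : I} (φ : i ⟶ j), Monotone (C.map φ))
    (hD : ∀ {i j : I} (φ : i ⟶ j), Monotone (D.map φ))
    (u : A ⟶ B) (v : A ⟶ C) (f : B ⟶ D) (g : C ⟶ D)
    (hmu : ∀ i, Monotone (u.app i)) (hmv : ∀ i, Monotone (v.app i))
    (hmf : ∀ i, Monotone (f.app i)) (hmg : ∀ i, Monotone (g.app i))
    (hlax : ∀ (i : I) (a : A.obj i), f.app i (u.app i a) ≤ g.app i (v.app i a))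
    (hinterp : ∀ (i : I) (b : B.obj i) (c : C.obj i), f.app i b ≤ g.app i c →
      ∃ a : A.obj i, b ≤ u.app i a ∧ v.app i a ≤ c) :
    ∀ (i j : I) (b : B.obj i) (c : C.obj j) (h : i ⟶ j),
      D.map h (f.app i b) ≤ g.app j c →
      ∃ (k : I) (a : A.obj k) (h₁ : i ⟶ k) (h₂ : k ⟶ j),
        B.map h₁ b ≤ u.app k a ∧ C.map h₂ (v.app k a) ≤ c := by
  intro i j b c h hle
  have hnat : D.map h (f.app i b) = f.app j (B.map h b) :=
    (FunctorToTypes.naturality f h b).symm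
  rw [hnat] at hle
  obtain ⟨a, ha1, ha2⟩ := hinterp j (B.map h b) c hle
  refine ⟨j, a, h, 𝟙 j, ha1, ?_⟩
  simpa using ha2
end

section
/- Let X be a Priestley space. Then X is an Esakia space (for every open U ⊆ X, the down-set ↓U is open) if and only if for every clopen up-set V of X and every open down-set U of V (in the subspace topology and order), the set ↓U (downward closure computed in X) is open in X. -/
/-!
In a compact Priestley space the sets `A ∩ B`, with `A` a clopen up-set and `B` a clopen
down-set, form a basis: they are closed under finite intersections and, by Priestley separation,
those containing `u` intersect to `{u}`, so by compactness one of them lies in any given open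
neighbourhood of `u`. Hence `↓U` is the union of the sets `↓(A ∩ B)` with `A ∩ B ⊆ U`, and
`A ∩ B` is an open down-set of the clopen up-set `A`.
-/

open Set

section

variable {X : Type*} [TopologicalSpace X] [PartialOrder X]

def clopenUpperLowerNhds (u : X) : Set (Set X × Set X) :=
  {p | IsClopen p.1 ∧ IsUpperSet p.1 ∧ IsClopen p.2 ∧ IsLowerSet p.2 ∧ u ∈ p.1 ∩ p.2}

lemma univ_mem_clopenUpperLowerNhds (u : X) : (univ, univ) ∈ clopenUpperLowerNhds u :=
  ⟨isClopen_univ, isUpperSet_univ, isClopen_univ, isLowerSet_univ, trivial, trivial⟩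

lemma directed_clopenUpperLowerNhds (u : X) :
    Directed (· ⊇ ·) fun p : clopenUpperLowerNhds u ↦ p.1.1 ∩ p.1.2 := by
  rintro ⟨⟨A, B⟩, hA, hAu, hB, hBl, huA, huB⟩ ⟨⟨A', B'⟩, hA', hAu', hB', hBl', huA', huB'⟩
  refine ⟨⟨(A ∩ A', B ∩ B'), hA.inter hA', hAu.inter hAu', hB.inter hB', hBl.inter hBl',
    ⟨huA, huA'⟩, ⟨huB, huB'⟩⟩, inter_subset_inter inter_subset_left inter_subset_left,
    inter_subset_inter inter_subset_right inter_subset_right⟩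

lemma iInter_clopenUpperLowerNhds_subset [PriestleySpace X] (u : X) :
    ⋂ p : clopenUpperLowerNhds u, p.1.1 ∩ p.1.2 ⊆ {u} := by
  intro x hx
  by_contra hxu
  obtain ⟨C, hC, hCul | hCul, huC, hxC⟩ := exists_isClopen_upper_or_lower_of_ne (Ne.symm hxu)
  · exact hxC (mem_iInter.1 hx ⟨(C, univ), hC, hCul, isClopen_univ, isLowerSet_univ,
      huC, trivial⟩).1
  · exact hxC (mem_iInter.1 hx ⟨(univ, C), isClopen_univ, isUpperSet_univ, hC, hCul,
      trivial, huC⟩).2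

lemma exists_isClopen_isUpperSet_isLowerSet_subset [CompactSpace X] [PriestleySpace X]
    {U : Set X} (hU : IsOpen U) {u : X} (hu : u ∈ U) :
    ∃ A B : Set X, IsClopen A ∧ IsUpperSet A ∧ IsClopen B ∧ IsLowerSet B ∧
      u ∈ A ∩ B ∧ A ∩ B ⊆ U := by
  have : Nonempty (clopenUpperLowerNhds u) := ⟨⟨_, univ_mem_clopenUpperLowerNhds u⟩⟩
  obtain ⟨⟨⟨A, B⟩, hA, hAu, hB, hBl, huAB⟩, hABU⟩ :=
    exists_subset_nhds_of_isCompact' (directed_clopenUpperLowerNhds u)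
      (fun p ↦ (p.2.1.isClosed.inter p.2.2.2.1.isClosed).isCompact)
      (fun p ↦ p.2.1.isClosed.inter p.2.2.2.1.isClosed)
      fun x hx ↦ iInter_clopenUpperLowerNhds_subset u hx ▸ hU.mem_nhds hu
  exact ⟨A, B, hA, hAu, hB, hBl, huAB, hABU⟩

end

/-- A Priestley space `X` is an Esakia space (the downward closure of
every open set is open) iff for every clopen up-set `V` of `X` and every subset `U ⊆ V`
that is open in the subspace topology of `V` and a down-set for the induced order on `V`,
the downward closure `↓U` (computed in `X`) is open in `X`. -/
theorem stmt_14 {X : Type*} [TopologicalSpace X] [PartialOrder X] [CompactSpace X]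
    (htod : ∀ x y : X, ¬x ≤ y → ∃ U : Set X, IsClopen U ∧ IsUpperSet U ∧ x ∈ U ∧ y ∉ U) :
    (∀ U : Set X, IsOpen U → IsOpen (↑(lowerClosure U) : Set X)) ↔
      ∀ V : Set X, IsClopen V → IsUpperSet V →
        ∀ U : Set X, U ⊆ V → (∃ W : Set X, IsOpen W ∧ U = W ∩ V) →
          (∀ x ∈ V, ∀ y ∈ V, x ≤ y → y ∈ U → x ∈ U) →
          IsOpen (↑(lowerClosure U) : Set X) := by
  have : PriestleySpace X := ⟨htod _ _⟩
  refine ⟨fun h V hV _ U _ ⟨W, hW, hUWV⟩ _ ↦ hUWV ▸ h _ (hW.inter hV.isOpen), fun h U hU ↦ ?_⟩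
  rw [isOpen_iff_forall_mem_open]
  rintro x ⟨u, hu, hxu⟩
  obtain ⟨A, B, hA, hAu, hB, hBl, huAB, hABU⟩ :=
    exists_isClopen_isUpperSet_isLowerSet_subset hU hu
  have hAB_open : IsOpen (↑(lowerClosure (A ∩ B)) : Set X) :=
    h A hA hAu (A ∩ B) inter_subset_left ⟨B, hB.isOpen, inter_comm A B⟩
      fun _ ha _ _ hab hbAB ↦ ⟨ha, hBl hab hbAB.2⟩
  exact ⟨_, lowerClosure_mono hABU, hAB_open, u, huAB, hxu⟩
end

section
/- Let D be a category admitting all filtered colimits, P : D → Set a functor preserving filtered colimits, and S a subfunctor of P. Suppose that for every X ∈ D and every p ∈ P(X) there is a morphism f : X → X' with P(f)(p) ∈ S(X'). Then for every X ∈ D there is a morphism f : X → Y such that S(Y) = P(Y). -/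
open CategoryTheory

universe w u
set_option synthInstance.maxHeartbeats 1000000
set_option maxHeartbeats 2000000


section
variable {D : Type u} [Category.{w} D] (P : D ⥤ Type w) (S : ∀ X : D, Set (P.obj X)) (X : D)

/-- A partial coherent chain of objects under `X`, indexed by a lower set of `P.obj X`. -/
structure Sys16 [LinearOrder (P.obj X)] where
  A : Set (P.obj X)
  lower : IsLowerSet A
  Y : ∀ j, j ∈ A → D
  toY : ∀ j (hj : j ∈ A), X ⟶ Y j hj
  map : ∀ j k (hj : j ∈ A) (hk : k ∈ A), j ≤ k → (Y j hj ⟶ Y k hk)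
  map_self : ∀ j hj, map j j hj hj le_rfl = 𝟙 _
  map_trans : ∀ j k l hj hk hl (h₁ : j ≤ k) (h₂ : k ≤ l),
      map j l hj hl (h₁.trans h₂) = map j k hj hk h₁ ≫ map k l hk hl h₂
  toY_map : ∀ j k hj hk (h : j ≤ k), toY j hj ≫ map j k hj hk h = toY k hk
  fixes : ∀ j (hj : j ∈ A), P.map (toY j hj) j ∈ S (Y j hj)

namespace Sys16
variable {P S X} [LinearOrder (P.obj X)]

/-- The extension (pre)order on systems. -/
structure Le (s t : Sys16 P S X) : Prop where
  sub : s.A ⊆ t.A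
  objEq : ∀ j hj, s.Y j hj = t.Y j (sub hj)
  toYEq : ∀ j hj, t.toY j (sub hj) = s.toY j hj ≫ eqToHom (objEq j hj)
  mapEq : ∀ j k hj hk (h : j ≤ k), t.map j k (sub hj) (sub hk) h =
      eqToHom (objEq j hj).symm ≫ s.map j k hj hk h ≫ eqToHom (objEq k hk)

instance : Preorder (Sys16 P S X) where
  le := Le
  le_refl s := ⟨subset_rfl, fun _ _ => rfl, by simp, by simp⟩
  le_trans s t u h₁ h₂ :=
    ⟨h₂.sub.trans' h₁.sub, fun j hj => (h₁.objEq j hj).trans (h₂.objEq j (h₁.sub hj)),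
     fun j hj => by rw [h₂.toYEq j (h₁.sub hj), h₁.toYEq j hj]; simp,
     fun j k hj hk h => by rw [h₂.mapEq j k (h₁.sub hj) (h₁.sub hk) h, h₁.mapEq j k hj hk h]; simp⟩

/-- Symmetric compatibility between two systems (holds for any two members of a chain). -/
structure Compat (s t : Sys16 P S X) : Prop where
  objEq : ∀ j (hjs : j ∈ s.A) (hjt : j ∈ t.A), s.Y j hjs = t.Y j hjt
  toYEq : ∀ j hjs hjt, t.toY j hjt = s.toY j hjs ≫ eqToHom (objEq j hjs hjt)
  mapEq : ∀ j k hjs hks hjt hkt (h : j ≤ k), t.map j k hjt hkt h =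
      eqToHom (objEq j hjs hjt).symm ≫ s.map j k hjs hks h ≫ eqToHom (objEq k hks hkt)

theorem compat_of_le {s t : Sys16 P S X} (h : s ≤ t) : Compat s t where
  objEq j hjs hjt := h.objEq j hjs
  toYEq j hjs hjt := h.toYEq j hjs
  mapEq j k hjs hks hjt hkt hle := h.mapEq j k hjs hks hle

theorem Compat.symm {s t : Sys16 P S X} (h : Compat s t) : Compat t s where
  objEq j hjt hjs := (h.objEq j hjs hjt).symm
  toYEq j hjt hjs := by rw [h.toYEq j hjs hjt]; simp
  mapEq j k hjt hkt hjs hks hle := by rw [h.mapEq j k hjs hks hjt hkt hle]; simp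

theorem compat_of_chain {c : Set (Sys16 P S X)} (hc : IsChain (· ≤ ·) c)
    {s t : Sys16 P S X} (hs : s ∈ c) (ht : t ∈ c) : Compat s t := by
  rcases hc.total hs ht with h | h
  · exact compat_of_le h
  · exact (compat_of_le h).symm


section UB
variable (c : Set (Sys16 P S X))

/-- Union of the index sets of a chain. -/
def cU : Set (P.obj X) := {j | ∃ s ∈ c, j ∈ s.A}

/-- A chosen member of the chain whose index set contains `j`. -/
noncomputable def pick (j : P.obj X) (hj : j ∈ cU c) : Sys16 P S X := hj.choose

theorem pick_mem (j : P.obj X) (hj : j ∈ cU c) : pick c j hj ∈ c := hj.choose_spec.1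

theorem pick_A (j : P.obj X) (hj : j ∈ cU c) : j ∈ (pick c j hj).A := hj.choose_spec.2

theorem cU_lower : IsLowerSet (cU c) := by
  intro k j hjk hk
  exact ⟨pick c k hk, pick_mem c k hk, (pick c k hk).lower hjk (pick_A c k hk)⟩

theorem memlow (j k : P.obj X) (hk : k ∈ cU c) (h : j ≤ k) : j ∈ (pick c k hk).A :=
  (pick c k hk).lower h (pick_A c k hk)

variable {c}
variable (hc : IsChain (· ≤ ·) c)

/-- Union of a chain of systems. -/
noncomputable def ub : Sys16 P S X where
  A := cU c
  lower := cU_lower c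
  Y j hj := (pick c j hj).Y j (pick_A c j hj)
  toY j hj := (pick c j hj).toY j (pick_A c j hj)
  map j k hj hk h :=
    eqToHom ((compat_of_chain hc (pick_mem c j hj) (pick_mem c k hk)).objEq j (pick_A c j hj)
      (memlow c j k hk h)) ≫ (pick c k hk).map j k (memlow c j k hk h) (pick_A c k hk) h
  map_self j hj := by beta_reduce; rw [(pick c j hj).map_self]; simp
  map_trans j k l hj hk hl h₁ h₂ := by
    beta_reduce
    have e := compat_of_chain hc (pick_mem c k hk) (pick_mem c l hl)
    rw [(pick c l hl).map_trans j k l (memlow c j l hl (h₁.trans h₂))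
        (memlow c k l hl h₂) (pick_A c l hl) h₁ h₂,
      e.mapEq j k (memlow c j k hk h₁) (pick_A c k hk) (memlow c j l hl (h₁.trans h₂))
        (memlow c k l hl h₂) h₁]
    simp
  toY_map j k hj hk h := by
    beta_reduce
    have e := compat_of_chain hc (pick_mem c j hj) (pick_mem c k hk)
    rw [← (pick c k hk).toY_map j k (memlow c j k hk h) (pick_A c k hk) h,
      e.toYEq j (pick_A c j hj) (memlow c j k hk h)]
    simp
  fixes j hj := (pick c j hj).fixes j (pick_A c j hj)

theorem le_ub {s : Sys16 P S X} (hs : s ∈ c) : s ≤ ub hc := by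
  have hsub : s.A ⊆ (ub hc).A := fun j hj => ⟨s, hs, hj⟩
  refine ⟨hsub, ?_, ?_, ?_⟩
  · intro j hj
    exact (compat_of_chain hc hs (pick_mem c j (hsub hj))).objEq j hj (pick_A c j (hsub hj))
  · intro j hj
    exact (compat_of_chain hc hs (pick_mem c j (hsub hj))).toYEq j hj (pick_A c j (hsub hj))
  · intro j k hj hk h
    have e := compat_of_chain hc hs (pick_mem c k (hsub hk))
    show eqToHom _ ≫ (pick c k (hsub hk)).map j k _ _ h = _
    rw [e.mapEq j k hj hk (memlow c j k (hsub hk) h) (pick_A c k (hsub hk)) h]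
    have e2 := compat_of_chain hc (pick_mem c j (hsub hj)) hs
    simp
    rfl
end UB

theorem mem_S_comp_eqToHom {Y Y' : D} (e : Y = Y') {Z₀ : D} (f : Z₀ ⟶ Y) (p : P.obj Z₀)
    (h : P.map f p ∈ S Y) : P.map (f ≫ eqToHom e) p ∈ S Y' := by
  subst e; simpa

section Ext
variable {M : Sys16 P S X} {i : P.obj X}
  {Z : D} (x₀ : X ⟶ Z) (ζ : ∀ j (hj : j ∈ M.A), M.Y j hj ⟶ Z)
  {W : D} (g : Z ⟶ W)

theorem ext_eq_of_not_mem {j : P.obj X} (hj : j ∈ insert i M.A) (h : j ∉ M.A) : j = i := by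
  rcases hj with rfl | hj
  · rfl
  · exact absurd hj h

theorem ext_absurd (hA : M.A = Set.Iio i) {j k : P.obj X} (hj : j ∈ insert i M.A)
    (hj' : j ∉ M.A) (hk' : k ∈ M.A) (h : j ≤ k) : False := by
  obtain rfl := ext_eq_of_not_mem hj hj'
  rw [hA] at hk'
  exact absurd hk' (not_lt.mpr h)

theorem ext_lower (hA : M.A = Set.Iio i) : IsLowerSet (insert i M.A) := by
  intro k j hjk hk
  rcases hk with rfl | hk
  · rcases lt_or_eq_of_le hjk with h | h
    · exact Or.inr (hA ▸ h)
    · exact Or.inl h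
  · exact Or.inr (M.lower hjk hk)

variable (M) (W)

open Classical in
/-- Objects of the extended system. -/
noncomputable def extY (j : P.obj X) (_ : j ∈ insert i M.A) : D :=
  if h : j ∈ M.A then M.Y j h else W

theorem extY_pos {j : P.obj X} (hj : j ∈ insert i M.A) (h : j ∈ M.A) :
    extY M W j hj = M.Y j h := dif_pos h

theorem extY_neg {j : P.obj X} (hj : j ∈ insert i M.A) (h : j ∉ M.A) :
    extY M W j hj = W := dif_neg h

variable {W}

open Classical in
/-- Structure maps from `X` in the extended system. -/
noncomputable def exttoY (j : P.obj X) (hj : j ∈ insert i M.A) : X ⟶ extY M W j hj :=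
  if h : j ∈ M.A then M.toY j h ≫ eqToHom (extY_pos M W hj h).symm
  else (x₀ ≫ g) ≫ eqToHom (extY_neg M W hj h).symm

open Classical in
/-- Transition maps of the extended system. -/
noncomputable def extmap (j k : P.obj X) (hj : j ∈ insert i M.A) (hk : k ∈ insert i M.A)
    (h : j ≤ k) : extY M W j hj ⟶ extY M W k hk :=
  if hk' : k ∈ M.A then
    eqToHom (extY_pos M W hj (M.lower h hk')) ≫ M.map j k (M.lower h hk') hk' h ≫
      eqToHom (extY_pos M W hk hk').symm
  else if hj' : j ∈ M.A then
    eqToHom (extY_pos M W hj hj') ≫ (ζ j hj' ≫ g) ≫ eqToHom (extY_neg M W hk hk').symm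
  else
    eqToHom ((extY_neg M W hj hj').trans (extY_neg M W hk hk').symm)

/-- The extended system. -/
noncomputable def ext (hA : M.A = Set.Iio i)
    (hζtoY : ∀ j hj, M.toY j hj ≫ ζ j hj = x₀)
    (hζmap : ∀ j k hj hk (h : j ≤ k), M.map j k hj hk h ≫ ζ k hk = ζ j hj)
    (hg : P.map g (P.map x₀ i) ∈ S W) : Sys16 P S X where
  A := insert i M.A
  lower := ext_lower hA
  Y := extY M W
  toY := exttoY M x₀ g
  map := extmap M ζ g
  map_self j hj := by
    by_cases h : j ∈ M.A
    · simp only [extmap, dif_pos h, M.map_self]; simp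
    · simp only [extmap, dif_neg h]; simp
  map_trans j k l hj hk hl h₁ h₂ := by
    by_cases hl' : l ∈ M.A
    · by_cases hk' : k ∈ M.A
      · have hjA : j ∈ M.A := M.lower h₁ hk'
        simp only [extmap, dif_pos hl', dif_pos hk']
        rw [M.map_trans j k l hjA hk' hl' h₁ h₂]
        simp
      · exact (ext_absurd hA hk hk' hl' h₂).elim
    · by_cases hk' : k ∈ M.A
      · have hjA : j ∈ M.A := M.lower h₁ hk'
        simp only [extmap, dif_pos hk', dif_neg hl', dif_pos hjA]
        rw [← hζmap j k hjA hk' h₁]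
        simp
      · by_cases hj' : j ∈ M.A
        · simp only [extmap, dif_neg hl', dif_neg hk', dif_pos hj']
          simp
        · simp only [extmap, dif_neg hl', dif_neg hk', dif_neg hj']
          simp
  toY_map j k hj hk h := by
    by_cases hk' : k ∈ M.A
    · have hjA : j ∈ M.A := M.lower h hk'
      simp only [exttoY, extmap, dif_pos hk', dif_pos hjA]
      rw [← M.toY_map j k hjA hk' h]
      simp
    · by_cases hj' : j ∈ M.A
      · simp only [exttoY, extmap, dif_neg hk', dif_pos hj']
        rw [← hζtoY j hj']
        simp
      · simp only [exttoY, extmap, dif_neg hk', dif_neg hj']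
        simp
  fixes j hj := by
    by_cases h : j ∈ M.A
    · simp only [exttoY, dif_pos h]
      exact mem_S_comp_eqToHom _ _ _ (M.fixes j h)
    · simp only [exttoY, dif_neg h]
      refine mem_S_comp_eqToHom _ _ _ ?_
      obtain rfl := ext_eq_of_not_mem hj h
      simpa [FunctorToTypes.map_comp_apply] using hg

variable {M}

theorem le_ext (hA : M.A = Set.Iio i)
    (hζtoY : ∀ j hj, M.toY j hj ≫ ζ j hj = x₀)
    (hζmap : ∀ j k hj hk (h : j ≤ k), M.map j k hj hk h ≫ ζ k hk = ζ j hj)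
    (hg : P.map g (P.map x₀ i) ∈ S W) :
    M ≤ ext M x₀ ζ g hA hζtoY hζmap hg := by
  refine ⟨fun j hj => Set.mem_insert_of_mem _ hj, ?_, ?_, ?_⟩
  · intro j hj
    show M.Y j hj = extY M W j (Set.mem_insert_of_mem i hj)
    exact (extY_pos M W _ hj).symm
  · intro j hj
    show exttoY M x₀ g j _ = _
    rw [exttoY, dif_pos hj]
    rfl
  · intro j k hj hk h
    show extmap M ζ g j k _ _ h = _
    rw [extmap, dif_pos hk]
    rfl

theorem mem_ext_A (hA : M.A = Set.Iio i)
    (hζtoY : ∀ j hj, M.toY j hj ≫ ζ j hj = x₀)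
    (hζmap : ∀ j k hj hk (h : j ≤ k), M.map j k hj hk h ≫ ζ k hk = ζ j hj)
    (hg : P.map g (P.map x₀ i) ∈ S W) :
    i ∈ (ext M x₀ ζ g hA hζtoY hζmap hg).A := Set.mem_insert _ _

end Ext

section Diagram
variable (M : Sys16 P S X)

/-- The filtered diagram associated with a system. -/
def diagram : {j : P.obj X // j ∈ M.A} ⥤ D where
  obj j := M.Y j j.2
  map {j k} f := M.map j k j.2 k.2 (leOfHom f)
  map_id j := M.map_self j j.2
  map_comp {j k l} f f' := M.map_trans j k l j.2 k.2 l.2 (leOfHom f) (leOfHom f')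

variable [Limits.HasFilteredColimitsOfSize.{w, w} D]
variable [Nonempty {j : P.obj X // j ∈ M.A}]

/-- The colimit of the diagram of a system. -/
noncomputable def zpt : D := Limits.colimit (diagram M)

/-- Colimit inclusions. -/
noncomputable def zι (j : P.obj X) (hj : j ∈ M.A) : M.Y j hj ⟶ zpt M :=
  Limits.colimit.ι (diagram M) ⟨j, hj⟩

theorem map_zι {j k : P.obj X} (hj : j ∈ M.A) (hk : k ∈ M.A) (h : j ≤ k) :
    M.map j k hj hk h ≫ zι M k hk = zι M j hj :=
  Limits.colimit.w (diagram M) (homOfLE (show (⟨j, hj⟩ : {j // j ∈ M.A}) ≤ ⟨k, hk⟩ from h))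

theorem toY_zι_const {j k : P.obj X} (hj : j ∈ M.A) (hk : k ∈ M.A) :
    M.toY j hj ≫ zι M j hj = M.toY k hk ≫ zι M k hk := by
  have key : ∀ a b (ha : a ∈ M.A) (hb : b ∈ M.A) (h : a ≤ b),
      M.toY a ha ≫ zι M a ha = M.toY b hb ≫ zι M b hb := by
    intro a b ha hb h
    rw [← M.toY_map a b ha hb h, Category.assoc, map_zι M ha hb h]
  rcases le_total j k with h | h
  · exact key j k hj hk h
  · exact (key k j hk hj h).symm

end Diagram
end Sys16

set_option synthInstance.maxHeartbeats 1000000 in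
set_option maxHeartbeats 1000000 in
/-- Key step: every object admits a morphism sending all of `P X` into `S`. -/
theorem key16 {D : Type u} [Category.{w} D]
    [Limits.HasFilteredColimitsOfSize.{w, w} D]
    (P : D ⥤ Type w) (S : ∀ X : D, Set (P.obj X))
    (hS : ∀ {X X' : D} (f : X ⟶ X') (p : P.obj X), p ∈ S X → P.map f p ∈ S X')
    (hsol : ∀ (X : D) (p : P.obj X), ∃ (X' : D) (f : X ⟶ X'), P.map f p ∈ S X')
    (X : D) : ∃ (Y : D) (f : X ⟶ Y), ∀ p : P.obj X, P.map f p ∈ S Y := by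
  classical
  by_cases hne : Nonempty (P.obj X)
  swap
  · exact ⟨X, 𝟙 X, fun p => (hne ⟨p⟩).elim⟩
  letI : LinearOrder (P.obj X) := IsWellOrder.linearOrder WellOrderingRel
  haveI : WellFoundedLT (P.obj X) := ⟨(WellOrderingRel.isWellOrder (α := P.obj X)).wf⟩
  -- Zorn's lemma
  obtain ⟨M, hM⟩ : ∃ M : Sys16 P S X, IsMax M :=
    zorn_le fun c hc => ⟨Sys16.ub hc, fun s hs => Sys16.le_ub hc hs⟩
  -- maximal systems are total
  have hA : M.A = Set.univ := by
    by_contra hAne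
    obtain ⟨i, hi, hleast⟩ : ∃ i, i ∉ M.A ∧ ∀ j, j < i → j ∈ M.A := by
      have hne' : {j : P.obj X | j ∉ M.A}.Nonempty := by
        rcases Set.ne_univ_iff_exists_notMem _ |>.mp hAne with ⟨i, hi⟩
        exact ⟨i, hi⟩
      refine ⟨wellFounded_lt.min _ hne', wellFounded_lt.min_mem _ hne', fun j hj => ?_⟩
      by_contra hj'
      exact wellFounded_lt.not_lt_min _ hj' hj
    have hAIio : M.A = Set.Iio i := by
      ext j
      constructor
      · intro hj
        by_contra hji
        exact hi (M.lower (not_lt.mp hji) hj)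
      · exact fun hj => hleast j hj
    -- build the data for the extension
    by_cases hσ : Nonempty {j : P.obj X // j ∈ M.A}
    · set Z := Sys16.zpt M with hZ
      set ζ : ∀ j (hj : j ∈ M.A), M.Y j hj ⟶ Z := Sys16.zι M with hζ
      obtain ⟨j₀, hj₀⟩ : {j : P.obj X // j ∈ M.A} := Classical.arbitrary _
      set x₀ : X ⟶ Z := M.toY j₀ hj₀ ≫ ζ j₀ hj₀ with hx₀
      obtain ⟨W, g, hg⟩ := hsol Z (P.map x₀ i)
      have hζtoY : ∀ j hj, M.toY j hj ≫ ζ j hj = x₀ := fun j hj =>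
        Sys16.toY_zι_const M hj hj₀
      have hζmap : ∀ j k hj hk (h : j ≤ k), M.map j k hj hk h ≫ ζ k hk = ζ j hj :=
        fun j k hj hk h => Sys16.map_zι M hj hk h
      have hle := Sys16.le_ext x₀ ζ g hAIio hζtoY hζmap hg
      have := (hM hle).sub (Sys16.mem_ext_A x₀ ζ g hAIio hζtoY hζmap hg)
      exact hi this
    · obtain ⟨W, g, hg⟩ := hsol X i
      have hg' : P.map g (P.map (𝟙 X) i) ∈ S W := by simpa using hg
      have hζtoY : ∀ j hj, M.toY j hj ≫ (fun j hj => (hσ ⟨⟨j, hj⟩⟩).elim : ∀ j (hj : j ∈ M.A), M.Y j hj ⟶ X) j hj = 𝟙 X :=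
        fun j hj => (hσ ⟨⟨j, hj⟩⟩).elim
      have hζmap : ∀ j k hj hk (h : j ≤ k), M.map j k hj hk h ≫ (fun j hj => (hσ ⟨⟨j, hj⟩⟩).elim : ∀ j (hj : j ∈ M.A), M.Y j hj ⟶ X) k hk = (fun j hj => (hσ ⟨⟨j, hj⟩⟩).elim : ∀ j (hj : j ∈ M.A), M.Y j hj ⟶ X) j hj :=
        fun j k hj hk h => (hσ ⟨⟨j, hj⟩⟩).elim
      have hle := Sys16.le_ext (𝟙 X) _ g hAIio hζtoY hζmap hg'
      have := (hM hle).sub (Sys16.mem_ext_A (𝟙 X) _ g hAIio hζtoY hζmap hg')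
      exact hi this
  -- now the colimit of the full system works
  haveI : Nonempty {j : P.obj X // j ∈ M.A} := by
    obtain ⟨p⟩ := hne
    exact ⟨⟨p, by simp [hA]⟩⟩
  obtain ⟨j₀, hj₀⟩ : {j : P.obj X // j ∈ M.A} := Classical.arbitrary _
  refine ⟨Sys16.zpt M, M.toY j₀ hj₀ ≫ Sys16.zι M j₀ hj₀, ?_⟩
  intro p
  have hp : p ∈ M.A := by simp [hA]
  rw [← Sys16.toY_zι_const M hp hj₀]
  rw [FunctorToTypes.map_comp_apply]
  exact hS _ _ (M.fixes p hp)
end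

/-- Let `D` be a category admitting all filtered colimits, `P : D ⥤ Type`
a functor preserving filtered colimits, and `S` a subfunctor of `P`. If every `p ∈ P X` can
be sent into `S` by some morphism `X ⟶ X'`, then every object `X` admits a morphism
`f : X ⟶ Y` with `S Y = P Y`. -/
theorem stmt_16 {D : Type u} [Category.{w} D]
    [Limits.HasFilteredColimitsOfSize.{w, w} D]
    (P : D ⥤ Type w) [Limits.PreservesFilteredColimitsOfSize.{w, w, w, w, u, w + 1} P]
    (S : ∀ X : D, Set (P.obj X))
    (hS : ∀ {X X' : D} (f : X ⟶ X') (p : P.obj X), p ∈ S X → P.map f p ∈ S X')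
    (hsol : ∀ (X : D) (p : P.obj X), ∃ (X' : D) (f : X ⟶ X'), P.map f p ∈ S X')
    (X : D) :
    ∃ (Y : D) (_ : X ⟶ Y), S Y = Set.univ := by
  classical
  choose key1 key2 key3 using fun Xc => key16 P S hS hsol Xc
  let seq : ℕ → D := fun n => Nat.rec X (fun _ q => key1 q) n
  let step : ∀ n, seq n ⟶ seq (n + 1) := fun n => key2 (seq n)
  have hstep : ∀ n p, P.map (step n) p ∈ S (seq (n + 1)) := fun n => key3 (seq n)
  haveI : Nonempty {n : ULift.{w} ℕ // True} := ⟨⟨⟨0⟩, trivial⟩⟩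
  let F : {n : ULift.{w} ℕ // True} ⥤ D :=
    { obj := fun n => seq n.1.down
      map := fun {a b} f => Functor.OfSequence.map step a.1.down b.1.down (by have h := leOfHom f; exact h)
      map_id := fun a => Functor.OfSequence.map_id step a.1.down
      map_comp := fun {a b c} f g =>
        Functor.OfSequence.map_comp step a.1.down b.1.down c.1.down (by have h := leOfHom f; exact h) (by have h := leOfHom g; exact h) }
  let c := Limits.colimit.cocone F
  have pc : Limits.IsColimit (P.mapCocone c) :=
    Limits.isColimitOfPreserves P (Limits.colimit.isColimit F)
  refine ⟨Limits.colimit F, Limits.colimit.ι F ⟨⟨0⟩, trivial⟩, ?_⟩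
  rw [Set.eq_univ_iff_forall]
  intro y
  obtain ⟨n, x, hx⟩ := Limits.Types.jointly_surjective _ pc y
  have hle : (n : {n : ULift.{w} ℕ // True}) ≤ ⟨⟨n.1.down + 1⟩, trivial⟩ :=
    Nat.le_add_right n.1.down 1
  have hmap : F.map (homOfLE hle) = step n.1.down := by
    show Functor.OfSequence.map step n.1.down (n.1.down + 1) _ = step n.1.down
    exact Functor.OfSequence.map_le_succ step n.1.down
  have hw : c.ι.app n = F.map (homOfLE hle) ≫ c.ι.app ⟨⟨n.1.down + 1⟩, trivial⟩ := by
    exact (Limits.colimit.w F (homOfLE hle)).symm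
  rw [← hx]
  show P.map (c.ι.app n) x ∈ S _
  rw [hw, hmap, FunctorToTypes.map_comp_apply]
  exact hS _ _ (hstep n.1.down x)
end

section
/- Let h : B → A be a homomorphism of distributive lattices with dual map f : Spec A → Spec B between Priestley spaces. Then h has a right adjoint if and only if for every open down-set U ⊆ Spec A, the downward closure ↓f[U] is open in Spec B. -/
open Set

namespace SpecL

section Lattice

variable {A : Type*} [Lattice A] [BoundedOrder A]

lemma monotone_apply (x : SpecL A) : Monotone x.1 := fun a b hab => by
  rw [← inf_eq_left.mpr hab, x.2.1]
  exact inf_le_right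

lemma apply_eq_false_of_le (x : SpecL A) {a b : A} (hab : a ≤ b) (hb : x.1 b = false) :
    x.1 a = false :=
  Bool.eq_false_of_le_false (hb ▸ x.monotone_apply hab)

lemma exists_apply_of_not_le {x y : SpecL A} (hyx : ¬y ≤ x) :
    ∃ b, y.1 b = true ∧ x.1 b = false := by
  by_contra! H
  exact hyx fun b => Bool.le_iff_imp.2 fun hb => by simpa using H b hb

def zeroLocus (a : A) : Set (SpecL A) := {x | x.1 a = false}

@[simp]
lemma mem_zeroLocus {a : A} {x : SpecL A} : x ∈ zeroLocus a ↔ x.1 a = false := Iff.rfl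

lemma zeroLocus_anti : Antitone (zeroLocus : A → Set (SpecL A)) := fun _ _ hab x hx =>
  apply_eq_false_of_le x hab hx

@[simp]
lemma zeroLocus_top : zeroLocus (⊤ : A) = ∅ :=
  eq_empty_of_forall_notMem fun x hx => by simp [x.2.2.2.1] at hx

lemma zeroLocus_inf (a b : A) : zeroLocus (a ⊓ b) = zeroLocus a ∪ zeroLocus b := by
  ext x
  simp only [mem_union, mem_zeroLocus, x.2.1, Bool.and_eq_false_iff]

lemma isLowerSet_zeroLocus (a : A) : IsLowerSet (zeroLocus a) := fun _ _ hxy hy =>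
  Bool.eq_false_of_le_false (hy ▸ hxy a)

lemma continuous_eval (a : A) : Continuous fun x : SpecL A => x.1 a :=
  (continuous_apply a).comp continuous_subtype_val

lemma isClopen_zeroLocus (a : A) : IsClopen (zeroLocus a) :=
  (isClopen_discrete {false}).preimage (continuous_eval a)

lemma isClosed_setOf_isSpecPoint : IsClosed {x : A → Bool | IsSpecPoint x} := by
  have hc : ∀ a : A, Continuous fun x : A → Bool => x a := continuous_apply
  have hc₂ : ∀ (op : Bool → Bool → Bool) (a b : A),
      Continuous fun x : A → Bool => op (x a) (x b) :=
    fun op a b => (continuous_of_discreteTopology (f := fun p : Bool × Bool => op p.1 p.2)).comp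
      ((hc a).prodMk (hc b))
  simp only [IsSpecPoint, ofPred_and, ofPred_forall]
  exact (isClosed_iInter fun a => isClosed_iInter fun b => isClosed_eq (hc _) (hc₂ _ a b)).inter
    ((isClosed_iInter fun a => isClosed_iInter fun b => isClosed_eq (hc _) (hc₂ _ a b)).inter
      ((isClosed_eq (hc _) continuous_const).inter (isClosed_eq (hc _) continuous_const)))

instance : CompactSpace (SpecL A) :=
  isCompact_iff_compactSpace.mp isClosed_setOf_isSpecPoint.isCompact

lemma _root_.IsCompact.exists_subset_compl_zeroLocus {K : Set (SpecL A)} (hK : IsCompact K)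
    {P : A → Prop} (hbot : P ⊥) (hsup : ∀ a b, P a → P b → P (a ⊔ b))
    (hcover : ∀ z ∈ K, ∃ b, z ∉ zeroLocus b ∧ P b) :
    ∃ a, P a ∧ K ⊆ (zeroLocus a)ᶜ := by
  have : Nonempty {b // P b} := ⟨⟨⊥, hbot⟩⟩
  obtain ⟨⟨a, ha⟩, hKa⟩ := hK.elim_directed_cover (fun b : {b // P b} => (zeroLocus b.1)ᶜ)
    (fun b => (isClopen_zeroLocus b.1).isClosed.isOpen_compl)
    (fun z hz => let ⟨b, hzb, hb⟩ := hcover z hz; mem_iUnion.2 ⟨⟨b, hb⟩, hzb⟩)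
    fun b c => ⟨⟨b.1 ⊔ c.1, hsup _ _ b.2 c.2⟩,
      compl_subset_compl.2 (zeroLocus_anti le_sup_left),
      compl_subset_compl.2 (zeroLocus_anti le_sup_right)⟩
  exact ⟨a, ha, hKa⟩

lemma _root_.IsCompact.exists_subset_zeroLocus {K : Set (SpecL A)} (hK : IsCompact K)
    {P : A → Prop} (htop : P ⊤) (hinf : ∀ a b, P a → P b → P (a ⊓ b))
    (hcover : ∀ z ∈ K, ∃ b, z ∈ zeroLocus b ∧ P b) :
    ∃ a, P a ∧ K ⊆ zeroLocus a := by
  have : Nonempty {b // P b} := ⟨⟨⊤, htop⟩⟩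
  obtain ⟨⟨a, ha⟩, hKa⟩ := hK.elim_directed_cover (fun b : {b // P b} => zeroLocus b.1)
    (fun b => (isClopen_zeroLocus b.1).isOpen)
    (fun z hz => let ⟨b, hzb, hb⟩ := hcover z hz; mem_iUnion.2 ⟨⟨b, hb⟩, hzb⟩)
    fun b c => ⟨⟨b.1 ⊓ c.1, hinf _ _ b.2 c.2⟩, zeroLocus_anti inf_le_left,
      zeroLocus_anti inf_le_right⟩
  exact ⟨a, ha, hKa⟩

lemma _root_.IsOpen.exists_zeroLocus_subset {U : Set (SpecL A)} (hU : IsOpen U)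
    (hUl : IsLowerSet U) {x : SpecL A} (hx : x ∈ U) :
    ∃ a, x ∈ zeroLocus a ∧ zeroLocus a ⊆ U := by
  obtain ⟨a, hxa, hUa⟩ := hU.isClosed_compl.isCompact.exists_subset_compl_zeroLocus
    (P := fun b => x ∈ zeroLocus b) x.2.2.2.2 (fun a b ha hb => by simp_all [x.2.2.1])
    fun z hz => by
      obtain ⟨b, hzb, hxb⟩ := exists_apply_of_not_le fun hzx => hz (hUl hzx hx)
      exact ⟨b, by simp [hzb], hxb⟩
  exact ⟨a, hxa, compl_subset_compl.1 hUa⟩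

lemma _root_.IsClopen.exists_eq_zeroLocus {D : Set (SpecL A)} (hD : IsClopen D)
    (hDl : IsLowerSet D) : ∃ a, D = zeroLocus a := by
  obtain ⟨a, haD, hDa⟩ := hD.isClosed.isCompact.exists_subset_zeroLocus
    (P := fun b => zeroLocus b ⊆ D) (by simp)
    (fun a b ha hb => (zeroLocus_inf a b).trans_subset (union_subset ha hb))
    fun y hy => hD.isOpen.exists_zeroLocus_subset hDl hy
  exact ⟨a, hDa.antisymm haD⟩

lemma _root_.IsCompact.isClosed_lowerClosure {K : Set (SpecL A)} (hK : IsCompact K) :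
    IsClosed (lowerClosure K : Set (SpecL A)) := by
  refine isOpen_compl_iff.1 (isOpen_iff_forall_mem_open.2 fun y hy => ?_)
  obtain ⟨a, hya, hKa⟩ := hK.exists_subset_zeroLocus (P := fun b => y.1 b = true) y.2.2.2.1
    (fun a b ha hb => by simp [y.2.1, ha, hb])
    fun z hz => by
      obtain ⟨b, hyb, hzb⟩ := exists_apply_of_not_le fun hyz => hy ⟨z, hz, hyz⟩
      exact ⟨b, hzb, hyb⟩
  refine ⟨(zeroLocus a)ᶜ, compl_subset_compl.2 (lowerClosure_min hKa (isLowerSet_zeroLocus a)),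
    (isClopen_zeroLocus a).isClosed.isOpen_compl, ?_⟩
  simp [hya]

end Lattice

section DistribLattice

variable {A : Type*} [DistribLattice A] [BoundedOrder A]

noncomputable def ofIsPrime (J : Order.Ideal A) (hJ : J.IsPrime) : SpecL A := by
  classical
  refine ⟨fun c => decide (c ∉ J), fun c d => ?_, fun c d => ?_, ?_, ?_⟩
  · have : c ⊓ d ∈ J ↔ c ∈ J ∨ d ∈ J :=
      ⟨hJ.mem_or_mem, fun h => h.elim (J.lower inf_le_left) (J.lower inf_le_right)⟩
    by_cases hc : c ∈ J <;> by_cases hd : d ∈ J <;> simp [hc, hd, this]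
  · by_cases hc : c ∈ J <;> by_cases hd : d ∈ J <;> simp [hc, hd, Order.Ideal.sup_mem_iff]
  · simp [hJ.toIsProper.top_notMem]
  · simp [J.bot_mem]

@[simp]
lemma ofIsPrime_apply_eq_false {J : Order.Ideal A} (hJ : J.IsPrime) {c : A} :
    (ofIsPrime J hJ).1 c = false ↔ c ∈ J := by
  classical
  simp [ofIsPrime]

lemma exists_apply_eq_false_of_isPFilter {F : Set A} (hF : Order.IsPFilter F) {a : A}
    (hFa : ∀ c ∈ F, ¬c ≤ a) :
    ∃ x : SpecL A, (∀ c ∈ F, x.1 c = true) ∧ x.1 a = false := by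
  have hdisj : Disjoint (hF.toPFilter : Set A) (Order.Ideal.principal a : Set A) :=
    disjoint_left.2 fun c hc hca => hFa c hc hca
  obtain ⟨J, hJ, haJ, hFJ⟩ := DistribLattice.prime_ideal_of_disjoint_filter_ideal hdisj
  refine ⟨ofIsPrime J hJ, fun c hc => ?_, (ofIsPrime_apply_eq_false hJ).2 (haJ le_rfl)⟩
  have hcJ := disjoint_left.1 hFJ hc
  rwa [SetLike.mem_coe, ← ofIsPrime_apply_eq_false hJ, Bool.not_eq_false] at hcJ

lemma zeroLocus_subset_zeroLocus_iff {a b : A} : zeroLocus b ⊆ zeroLocus a ↔ a ≤ b := by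
  refine ⟨fun hab => ?_, fun hab => zeroLocus_anti hab⟩
  by_contra hab'
  obtain ⟨x, hxa, hxb⟩ :=
    exists_apply_eq_false_of_isPFilter (Order.PFilter.principal a).isPFilter (a := b)
      fun c hac hcb => hab' (hac.trans hcb)
  exact absurd (hab hxb) (by simp [hxa a le_rfl])

end DistribLattice

section Dual

variable {A B : Type*} [DistribLattice A] [BoundedOrder A] [Lattice B] [BoundedOrder B]
  {h : BoundedLatticeHom B A} {f : SpecL A → SpecL B}

lemma continuous_of_apply_eq (hf : ∀ (x : SpecL A) (b : B), (f x).1 b = x.1 (h b)) :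
    Continuous f :=
  continuous_induced_rng.2 <| continuous_pi fun b => by
    simp only [Function.comp_def, hf]
    exact continuous_eval (h b)

lemma preimage_zeroLocus (hf : ∀ (x : SpecL A) (b : B), (f x).1 b = x.1 (h b)) (b : B) :
    f ⁻¹' zeroLocus b = zeroLocus (h b) := by
  ext x
  simp [hf]

lemma lowerClosure_image_zeroLocus_subset_iff
    (hf : ∀ (x : SpecL A) (b : B), (f x).1 b = x.1 (h b)) {a : A} {b : B} :
    (lowerClosure (f '' zeroLocus a) : Set (SpecL B)) ⊆ zeroLocus b ↔ h b ≤ a :=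
  calc (lowerClosure (f '' zeroLocus a) : Set (SpecL B)) ⊆ zeroLocus b
      ↔ f '' zeroLocus a ⊆ zeroLocus b :=
        ⟨subset_lowerClosure.trans, fun H => lowerClosure_min H (isLowerSet_zeroLocus b)⟩
    _ ↔ zeroLocus a ⊆ zeroLocus (h b) := by rw [image_subset_iff, preimage_zeroLocus hf]
    _ ↔ h b ≤ a := zeroLocus_subset_zeroLocus_iff

lemma lowerClosure_image_zeroLocus_eq (hf : ∀ (x : SpecL A) (b : B), (f x).1 b = x.1 (h b))
    {q : A → B} (gc : GaloisConnection h q) (a : A) :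
    (lowerClosure (f '' zeroLocus a) : Set (SpecL B)) = zeroLocus (q a) := by
  refine ((lowerClosure_image_zeroLocus_subset_iff hf).2 (gc.l_u_le a)).antisymm fun y hy => ?_
  have hF : Order.IsPFilter {c : A | ∃ b, y.1 b = true ∧ h b ≤ c} :=
    .of_def ⟨⊤, ⊤, y.2.2.2.1, le_top⟩
      (fun c ⟨b₁, hb₁, hc⟩ d ⟨b₂, hb₂, hd⟩ =>
        ⟨h (b₁ ⊓ b₂), ⟨b₁ ⊓ b₂, by simp [y.2.1, hb₁, hb₂], le_rfl⟩,
          (map_inf h b₁ b₂).trans_le (inf_le_left.trans hc),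
          (map_inf h b₁ b₂).trans_le (inf_le_right.trans hd)⟩)
      fun hcd ⟨b, hb, hbc⟩ => ⟨b, hb, hbc.trans hcd⟩
  obtain ⟨x, hxF, hxa⟩ := exists_apply_eq_false_of_isPFilter hF fun c ⟨b, hb, hbc⟩ hca => by
    simp [apply_eq_false_of_le y (gc.le_u (hbc.trans hca)) hy] at hb
  exact ⟨f x, mem_image_of_mem f hxa, fun b => Bool.le_iff_imp.2 fun hb =>
    (hf x b).trans (hxF _ ⟨b, hb, le_rfl⟩)⟩

lemma isOpen_lowerClosure_image (hf : ∀ (x : SpecL A) (b : B), (f x).1 b = x.1 (h b))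
    {q : A → B} (gc : GaloisConnection h q) {U : Set (SpecL A)} (hU : IsOpen U)
    (hUl : IsLowerSet U) : IsOpen (lowerClosure (f '' U) : Set (SpecL B)) := by
  refine isOpen_iff_forall_mem_open.2 fun y ⟨_, ⟨x, hxU, hfx⟩, hyx⟩ => ?_
  obtain ⟨a, hxa, haU⟩ := hU.exists_zeroLocus_subset hUl hxU
  refine ⟨zeroLocus (q a), ?_, (isClopen_zeroLocus (q a)).isOpen, ?_⟩ <;>
    rw [← lowerClosure_image_zeroLocus_eq hf gc a]
  · exact lowerClosure_mono (image_mono haU)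
  · exact ⟨f x, mem_image_of_mem f hxa, hfx ▸ hyx⟩

lemma exists_lowerClosure_image_zeroLocus_eq
    (hf : ∀ (x : SpecL A) (b : B), (f x).1 b = x.1 (h b)) {a : A}
    (ha : IsOpen (lowerClosure (f '' zeroLocus a) : Set (SpecL B))) :
    ∃ b, (lowerClosure (f '' zeroLocus a) : Set (SpecL B)) = zeroLocus b :=
  IsClopen.exists_eq_zeroLocus
    ⟨((isClopen_zeroLocus a).isClosed.isCompact.image
      (continuous_of_apply_eq hf)).isClosed_lowerClosure, ha⟩
    (lowerClosure (f '' zeroLocus a)).lower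

end Dual

end SpecL

open SpecL in
/-- A homomorphism `h : B → A` of bounded distributive lattices has a
right adjoint iff its Priestley dual `f : Spec A → Spec B`, `f x = x ∘ h`, satisfies: for
every open down-set `U ⊆ Spec A`, the downward closure `↓f[U]` is open in `Spec B`. -/
theorem stmt_17 {A B : Type*} [DistribLattice A] [BoundedOrder A]
    [DistribLattice B] [BoundedOrder B]
    (h : BoundedLatticeHom B A)
    (f : SpecL A → SpecL B)
    (hf : ∀ (x : SpecL A) (b : B), (f x).1 b = x.1 (h b)) :
    (∃ q : A → B, ∀ (a : A) (b : B), h b ≤ a ↔ b ≤ q a) ↔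
      ∀ U : Set (SpecL A), IsOpen U → IsLowerSet U →
        IsOpen (↑(lowerClosure (f '' U)) : Set (SpecL B)) := by
  constructor
  · rintro ⟨q, hq⟩ U hU hUl
    exact isOpen_lowerClosure_image hf (fun b a => hq a b) hU hUl
  · intro hop
    choose q hq using fun a => exists_lowerClosure_image_zeroLocus_eq hf
      (hop _ (isClopen_zeroLocus a).isOpen (isLowerSet_zeroLocus a))
    refine ⟨q, fun a b => ?_⟩
    rw [← lowerClosure_image_zeroLocus_subset_iff hf, hq, zeroLocus_subset_zeroLocus_iff]
end

section
/- Let S be a functor from FinSet^op to Set with the amalgamation property (every span in the category of elements of S admits a cocone), defined concretely by: for every cospan of functions g : k → n, h : k → m and elements x ∈ S(n), y ∈ S(m) with S(g)(x) = S(h)(y), there exist a finite set l, functions u : n → l, v : m → l with g∘u = h∘v, and z ∈ S(l) with S(u)(z) = x and S(v)(z) = y. Then it is NOT in general true that the extension by continuity S̄ : Set^op → Set (sending an arbitrary set to the limit of S over its finite subsets) has the amalgamation property; however, if each S(n) carries a compact ordered (in particular compact Hausdorff) topology making S a functor into compact spaces, then S̄ does have the amalgamation property for cospans of arbitrary sets.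 -/
open CategoryTheory Opposite

namespace Stmt19

/-- The inclusion of finite subsets `F ⊆ G` of `X`, as a morphism in `FintypeCat`. -/
def incl {X : Type} (F G : Finset X) (h : F ⊆ G) :
    FintypeCat.of (↥F) ⟶ FintypeCat.of (↥G) :=
  FintypeCat.homMk fun a => ⟨a.1, h a.2⟩

/-- A compatible family for `S : FinSetᵒᵖ ⥤ Set` over the finite subsets of a set `X`,
i.e. an element of the extension by continuity `S̄(X) = lim_{F ⊆ X finite} S(F)`. -/
def Compat {X : Type} (S : FintypeCatᵒᵖ ⥤ Type)
    (x : ∀ F : Finset X, S.obj (op (FintypeCat.of ↥F))) : Prop :=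
  ∀ (F G : Finset X) (h : F ⊆ G), S.map (incl F G h).op (x G) = x F

/-- The functorial action of the extension by continuity `S̄` on a function `f : K → N`:
the restriction of a family over `N` to a family over `K`, via `F ↦ f '' F`. -/
noncomputable def restrictFamily {K N : Type} (S : FintypeCatᵒᵖ ⥤ Type) (f : K → N)
    (x : ∀ G : Finset N, S.obj (op (FintypeCat.of ↥G))) :
    ∀ F : Finset K, S.obj (op (FintypeCat.of ↥F)) := fun F =>
  letI := Classical.decEq N
  S.map (Quiver.Hom.op
    (show FintypeCat.of ↥F ⟶ FintypeCat.of ↥(F.image f) from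
      FintypeCat.homMk fun a => ⟨f a.1, Finset.mem_image_of_mem f a.2⟩)) (x (F.image f))

/-- The amalgamation property of a presheaf `S : FinSetᵒᵖ ⥤ Set`: every span in the
category of elements admits a cocone. -/
def Amalg (S : FintypeCatᵒᵖ ⥤ Type) : Prop :=
  ∀ (k n m : FintypeCat) (g : k ⟶ n) (h : k ⟶ m)
    (x : S.obj (op n)) (y : S.obj (op m)),
    S.map g.op x = S.map h.op y →
    ∃ (l : FintypeCat) (u : n ⟶ l) (v : m ⟶ l) (z : S.obj (op l)),
      g ≫ u = h ≫ v ∧ S.map u.op z = x ∧ S.map v.op z = y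

/-- The amalgamation property of the extension by continuity `S̄ : Setᵒᵖ ⥤ Set` of `S`,
for cospans of arbitrary sets. -/
def ExtAmalg (S : FintypeCatᵒᵖ ⥤ Type) : Prop :=
  ∀ (K N M : Type) (g : K → N) (h : K → M)
    (x : ∀ F : Finset N, S.obj (op (FintypeCat.of ↥F)))
    (y : ∀ F : Finset M, S.obj (op (FintypeCat.of ↥F))),
    Compat S x → Compat S y →
    restrictFamily S g x = restrictFamily S h y →
    ∃ (L : Type) (u : N → L) (v : M → L)
      (z : ∀ F : Finset L, S.obj (op (FintypeCat.of ↥F))),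
      (∀ a : K, u (g a) = v (h a)) ∧ Compat S z ∧
        restrictFamily S u z = x ∧ restrictFamily S v z = y

end Stmt19

namespace Stmt19Aux
open Stmt19


abbrev E := ℕ∞

def Ax {α : Type} (d : α → α → E) (f : α → Bool) : Prop :=
  (∀ a, d a a = ⊤) ∧ (∀ a b, d a b = d b a) ∧ (∀ a b c, min (d a b) (d b c) ≤ d a c) ∧
  (∀ a b, d a b = ⊤ → f a = f b)

def Ax.pull {α β : Type} {d : α → α → E} {f : α → Bool} (h : Ax d f) (φ : β → α) :
    Ax (fun a b => d (φ a) (φ b)) (fun a => f (φ a)) :=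
  ⟨fun a => h.1 _, fun a b => h.2.1 _ _, fun a b c => h.2.2.1 _ _ _, fun a b hab => h.2.2.2 _ _ hab⟩

def SC : FintypeCatᵒᵖ ⥤ Type where
  obj n := {p : (↥n.unop → ↥n.unop → E) × (↥n.unop → Bool) // Ax p.1 p.2}
  map φ := TypeCat.ofHom fun p => ⟨(fun a b => p.1.1 (φ.unop a) (φ.unop b), fun a => p.1.2 (φ.unop a)),
    p.2.pull φ.unop⟩

section core
variable {k n m : Type} [Fintype k] (g : k → n) (h : k → m)
  (dx : n → n → E) (fx : n → Bool) (dy : m → m → E) (fy : m → Bool)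

noncomputable def cross (p : n) (q : m) : E := Finset.univ.sup fun c : k => min (dx p (g c)) (dy (h c) q)

noncomputable def DD : (n ⊕ m) → (n ⊕ m) → E := fun s t =>
  match s, t with
  | .inl p, .inl p' => dx p p'
  | .inl p, .inr q => cross g h dx dy p q
  | .inr q, .inl p => cross g h dx dy p q
  | .inr q, .inr q' => dy q q'

def FF : (n ⊕ m) → Bool := Sum.elim fx fy

variable (hx : Ax dx fx) (hy : Ax dy fy)
  (hd : ∀ c c', dx (g c) (g c') = dy (h c) (h c'))
  (hf : ∀ c, fx (g c) = fy (h c))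

section
include hx hy hd

theorem cross_le {p q} {X : E} (hX : ∀ c, min (dx p (g c)) (dy (h c) q) ≤ X) :
    cross g h dx dy p q ≤ X := Finset.sup_le fun c _ => hX c

omit hx hy hd in
theorem le_cross (p q) (c : k) : min (dx p (g c)) (dy (h c) q) ≤ cross g h dx dy p q :=
  Finset.le_sup (f := fun c : k => min (dx p (g c)) (dy (h c) q)) (Finset.mem_univ c)

omit hy hd in
theorem triLLR (p p' q) :
    min (dx p p') (cross g h dx dy p' q) ≤ cross g h dx dy p q := by
  have tx := hx.2.2.1
  rw [show (min (dx p p') (cross g h dx dy p' q)) = Finset.univ.sup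
      (fun c : k => min (dx p p') (min (dx p' (g c)) (dy (h c) q))) by
    rw [← Finset.sup_inf_distrib_left]; rfl]
  refine Finset.sup_le fun c _ => le_trans ?_ (le_cross g h dx dy p q c)
  refine le_min (le_trans ?_ (tx p p' (g c))) ?_
  · exact le_min (min_le_left _ _) ((min_le_right _ _).trans (min_le_left _ _))
  · exact (min_le_right _ _).trans (min_le_right _ _)

omit hx hd in
theorem triLRR (p q q') :
    min (cross g h dx dy p q) (dy q q') ≤ cross g h dx dy p q' := by
  have ty := hy.2.2.1
  rw [show (min (cross g h dx dy p q) (dy q q')) = Finset.univ.sup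
      (fun c : k => min (min (dx p (g c)) (dy (h c) q)) (dy q q')) by
    rw [← Finset.sup_inf_distrib_right]; rfl]
  refine Finset.sup_le fun c _ => le_trans ?_ (le_cross g h dx dy p q' c)
  refine le_min ((min_le_left _ _).trans (min_le_left _ _)) (le_trans ?_ (ty (h c) q q'))
  exact le_min ((min_le_left _ _).trans (min_le_right _ _)) (min_le_right _ _)

theorem triLRL (p q p') :
    min (cross g h dx dy p q) (cross g h dx dy p' q) ≤ dx p p' := by
  have tx := hx.2.2.1; have sx := hx.2.1; have ty := hy.2.2.1; have sy := hy.2.1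
  rw [show (min (cross g h dx dy p q) (cross g h dx dy p' q)) = Finset.univ.sup
      (fun c : k => min (min (dx p (g c)) (dy (h c) q)) (cross g h dx dy p' q)) by
    rw [← Finset.sup_inf_distrib_right]; rfl]
  refine Finset.sup_le fun c _ => ?_
  rw [show (min (min (dx p (g c)) (dy (h c) q)) (cross g h dx dy p' q)) = Finset.univ.sup
      (fun c' : k => min (min (dx p (g c)) (dy (h c) q)) (min (dx p' (g c')) (dy (h c') q))) by
    rw [← Finset.sup_inf_distrib_left]; rfl]
  refine Finset.sup_le fun c' _ => ?_
  have h2 : min (dy (h c) q) (dy q (h c')) ≤ dy (h c) (h c') := ty _ _ _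
  have h3 : min (dx p (g c)) (dx (g c) p') ≤ dx p p' := tx _ _ _
  have h4 : min (dx (g c) (g c')) (dx (g c') p') ≤ dx (g c) p' := tx _ _ _
  calc min (min (dx p (g c)) (dy (h c) q)) (min (dx p' (g c')) (dy (h c') q))
      ≤ min (dx p (g c)) (min (min (dy (h c) q) (dy q (h c'))) (dx (g c') p')) := by
        rw [sy q (h c'), sx p' (g c')]
        refine le_min ((min_le_left _ _).trans (min_le_left _ _)) (le_min (le_min ?_ ?_) ?_)
        · exact (min_le_left _ _).trans (min_le_right _ _)
        · exact (min_le_right _ _).trans (min_le_right _ _)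
        · exact (min_le_right _ _).trans (min_le_left _ _)
    _ ≤ min (dx p (g c)) (min (dx (g c) (g c')) (dx (g c') p')) := by
        refine min_le_min le_rfl (min_le_min ?_ le_rfl)
        rw [hd c c']; exact h2
    _ ≤ min (dx p (g c)) (dx (g c) p') := min_le_min le_rfl h4
    _ ≤ dx p p' := h3

theorem triRLR (q p q') :
    min (cross g h dx dy p q) (cross g h dx dy p q') ≤ dy q q' := by
  have tx := hx.2.2.1; have sx := hx.2.1; have ty := hy.2.2.1; have sy := hy.2.1
  rw [show (min (cross g h dx dy p q) (cross g h dx dy p q')) = Finset.univ.sup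
      (fun c : k => min (min (dx p (g c)) (dy (h c) q)) (cross g h dx dy p q')) by
    rw [← Finset.sup_inf_distrib_right]; rfl]
  refine Finset.sup_le fun c _ => ?_
  rw [show (min (min (dx p (g c)) (dy (h c) q)) (cross g h dx dy p q')) = Finset.univ.sup
      (fun c' : k => min (min (dx p (g c)) (dy (h c) q)) (min (dx p (g c')) (dy (h c') q'))) by
    rw [← Finset.sup_inf_distrib_left]; rfl]
  refine Finset.sup_le fun c' _ => ?_
  have h2 : min (dx (g c) p) (dx p (g c')) ≤ dx (g c) (g c') := tx _ _ _
  have h3 : min (dy q (h c)) (dy (h c) q') ≤ dy q q' := ty _ _ _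
  have h4 : min (dy (h c) (h c')) (dy (h c') q') ≤ dy (h c) q' := ty _ _ _
  calc min (min (dx p (g c)) (dy (h c) q)) (min (dx p (g c')) (dy (h c') q'))
      ≤ min (dy q (h c)) (min (min (dx (g c) p) (dx p (g c'))) (dy (h c') q')) := by
        rw [sy (h c) q, sx p (g c)]
        refine le_min ((min_le_left _ _).trans (min_le_right _ _)) (le_min (le_min ?_ ?_) ?_)
        · exact (min_le_left _ _).trans (min_le_left _ _)
        · exact (min_le_right _ _).trans (min_le_left _ _)
        · exact (min_le_right _ _).trans (min_le_right _ _)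
    _ ≤ min (dy q (h c)) (min (dy (h c) (h c')) (dy (h c') q')) := by
        refine min_le_min le_rfl (min_le_min ?_ le_rfl)
        rw [← hd c c']; exact h2
    _ ≤ min (dy q (h c)) (dy (h c) q') := min_le_min le_rfl h4
    _ ≤ dy q q' := h3

theorem DDtri (s t w) : min (DD g h dx dy s t) (DD g h dx dy t w) ≤ DD g h dx dy s w := by
  rcases s with p|q <;> rcases t with p'|q' <;> rcases w with p''|q'' <;> simp only [DD]
  · exact hx.2.2.1 p p' p''
  · exact triLLR (g:=g) (h:=h) (dx:=dx) (fx:=fx) (dy:=dy) (hx:=hx) p p' q''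
  · exact triLRL (g:=g) (h:=h) (dx:=dx) (fx:=fx) (dy:=dy) (fy:=fy) (hx:=hx) (hy:=hy) (hd:=hd) p q' p''
  · exact triLRR (g:=g) (h:=h) (dx:=dx) (dy:=dy) (fy:=fy) (hy:=hy) p q' q''
  · rw [min_comm, hx.2.1 p' p'']
    exact triLLR (g:=g) (h:=h) (dx:=dx) (fx:=fx) (dy:=dy) (hx:=hx) p'' p' q
  · exact triRLR (g:=g) (h:=h) (dx:=dx) (fx:=fx) (dy:=dy) (fy:=fy) (hx:=hx) (hy:=hy) (hd:=hd) q p' q''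
  · rw [min_comm, hy.2.1 q q']
    exact triLRR (g:=g) (h:=h) (dx:=dx) (dy:=dy) (fy:=fy) (hy:=hy) p'' q' q
  · exact hy.2.2.1 q q' q''

omit hd in
theorem DDdiag (s) : DD g h dx dy s s = ⊤ := by
  rcases s with p|q
  · exact hx.1 p
  · exact hy.1 q

theorem DDsymm (s t) : DD g h dx dy s t = DD g h dx dy t s := by
  rcases s with p|q <;> rcases t with p'|q' <;> simp only [DD]
  · exact hx.2.1 p p'
  · exact hy.2.1 q q'

include hf in
theorem DDlab (s t) (htop : DD g h dx dy s t = ⊤) : FF fx fy s = FF fx fy t := by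
  rcases s with p|q <;> rcases t with p'|q' <;> simp only [DD, FF] at htop ⊢
  · exact hx.2.2.2 _ _ htop
  · -- cross p q' = ⊤
    rcases isEmpty_or_nonempty k with hk | hk
    · exfalso
      rw [cross, Finset.univ_eq_empty, Finset.sup_empty] at htop
      exact (bot_ne_top (α := E)) htop
    · obtain ⟨c, _, hc⟩ := Finset.exists_mem_eq_sup (Finset.univ : Finset k)
        Finset.univ_nonempty (fun c : k => min (dx p (g c)) (dy (h c) q'))
      rw [cross] at htop
      rw [htop] at hc
      have h1 : dx p (g c) = ⊤ := top_le_iff.mp (hc.le.trans (min_le_left _ _))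
      have h2 : dy (h c) q' = ⊤ := top_le_iff.mp (hc.le.trans (min_le_right _ _))
      simp only [Sum.elim_inl, Sum.elim_inr]
      rw [hx.2.2.2 _ _ h1, hf c, hy.2.2.2 _ _ h2]
  · rcases isEmpty_or_nonempty k with hk | hk
    · exfalso
      rw [cross, Finset.univ_eq_empty, Finset.sup_empty] at htop
      exact (bot_ne_top (α := E)) htop
    · obtain ⟨c, _, hc⟩ := Finset.exists_mem_eq_sup (Finset.univ : Finset k)
        Finset.univ_nonempty (fun c : k => min (dx p' (g c)) (dy (h c) q))
      rw [cross] at htop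
      rw [htop] at hc
      have h1 : dx p' (g c) = ⊤ := top_le_iff.mp (hc.le.trans (min_le_left _ _))
      have h2 : dy (h c) q = ⊤ := top_le_iff.mp (hc.le.trans (min_le_right _ _))
      simp only [Sum.elim_inl, Sum.elim_inr]
      exact (hy.2.2.2 _ _ h2).symm.trans ((hf c).symm.trans (hx.2.2.2 _ _ h1).symm)
  · exact hy.2.2.2 _ _ htop

theorem DDinv (c : k) (t : n ⊕ m) :
    DD g h dx dy (.inl (g c)) t = DD g h dx dy (.inr (h c)) t := by
  rcases t with p|q <;> simp only [DD]
  · -- dx (g c) p = cross p (h c)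
    refine le_antisymm ?_ ?_
    · have := le_cross g h dx dy p (h c) c
      rw [hy.1 (h c)] at this
      rw [hx.2.1 (g c) p]
      simpa using this
    · refine Finset.sup_le fun c' _ => ?_
      have h1 : min (dx p (g c')) (dx (g c') (g c)) ≤ dx p (g c) := hx.2.2.1 _ _ _
      rw [hx.2.1 (g c) p]
      exact le_trans (min_le_min le_rfl (hd c' c).ge) h1
  · -- cross (g c) q = dy (h c) q
    refine le_antisymm ?_ ?_
    · refine Finset.sup_le fun c' _ => ?_
      have h1 : min (dy (h c) (h c')) (dy (h c') q) ≤ dy (h c) q := hy.2.2.1 _ _ _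
      exact le_trans (min_le_min (hd c c').le le_rfl) h1
    · have := le_cross g h dx dy (g c) q c
      rw [hx.1 (g c)] at this
      simpa using this

end
end core

theorem amalgSC : Amalg.{0} SC := by
  intro k n m g h x y hagree
  letI := @FintypeCat.fintype k; letI := @FintypeCat.fintype n; letI := @FintypeCat.fintype m
  obtain ⟨⟨⟨dx, fx⟩, hx⟩, rfl⟩ :
      ∃ x' : {p : (↥n → ↥n → E) × (↥n → Bool) // Ax p.1 p.2}, x' = x := ⟨x, rfl⟩
  obtain ⟨⟨⟨dy, fy⟩, hy⟩, rfl⟩ :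
      ∃ y' : {p : (↥m → ↥m → E) × (↥m → Bool) // Ax p.1 p.2}, y' = y := ⟨y, rfl⟩
  have hd : ∀ c c' : ↥k, dx (g c) (g c') = dy (h c) (h c') := fun c c' =>
    congrFun (congrFun (congrArg (fun w => w.1.1) hagree) c) c'
  have hf : ∀ c : ↥k, fx (g c) = fy (h c) := fun c =>
    congrFun (congrArg (fun w => w.1.2) hagree) c
  let r : (↥n ⊕ ↥m) → (↥n ⊕ ↥m) → Prop :=
    fun s t => ∃ c, s = .inl (g c) ∧ t = .inr (h c)
  letI : Fintype (Quot r) :=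
    @Fintype.ofSurjective _ _ (Classical.decEq _) _ (Quot.mk r) (fun q => Quot.exists_rep q)
  let l : FintypeCat := FintypeCat.of (Quot r)
  let u : n ⟶ l := FintypeCat.homMk fun a => Quot.mk r (.inl a)
  let v : m ⟶ l := FintypeCat.homMk fun b => Quot.mk r (.inr b)
  have inv1 : ∀ (s₁ s₂ t : ↥n ⊕ ↥m), r s₁ s₂ → DD g h dx dy s₁ t = DD g h dx dy s₂ t := by
    rintro _ _ t ⟨c, rfl, rfl⟩
    exact DDinv (fx := fx) (fy := fy) g h dx dy hx hy hd c t
  have Dsym := DDsymm (g:=g) (h:=h) (dx:=dx) (dy:=dy) (fx:=fx) (fy:=fy) hx hy hd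
  let dz : Quot r → Quot r → E :=
    Quot.lift₂ (DD g h dx dy)
      (fun a b₁ b₂ hb => by rw [Dsym a b₁, Dsym a b₂]; exact inv1 _ _ _ hb)
      (fun a₁ a₂ b ha => inv1 _ _ _ ha)
  let fz : Quot r → Bool :=
    Quot.lift (FF fx fy) (by
      rintro _ _ ⟨c, rfl, rfl⟩
      simp only [FF, Sum.elim_inl, Sum.elim_inr]
      exact hf c)
  have hz : Ax dz fz := by
    refine ⟨?_, ?_, ?_, ?_⟩
    · exact Quot.ind (DDdiag (fx := fx) (fy := fy) g h dx dy hx hy)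
    · exact Quot.ind fun s => Quot.ind fun t => Dsym s t
    · exact Quot.ind fun s => Quot.ind fun t => Quot.ind fun w =>
        DDtri (fx := fx) (fy := fy) g h dx dy hx hy hd s t w
    · exact Quot.ind fun s => Quot.ind fun t =>
        DDlab (g:=g) (h:=h) (dx:=dx) (dy:=dy) (fx:=fx) (fy:=fy) hx hy hd hf s t
  refine ⟨l, u, v, ⟨(dz, fz), hz⟩, ?_, ?_, ?_⟩
  · exact FintypeCat.hom_ext _ _ fun c => Quot.sound ⟨c, rfl, rfl⟩
  · rfl
  · rfl

-- ### The counterexample families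
def dN : (ℕ ⊕ Unit) → (ℕ ⊕ Unit) → E
  | .inl t, .inl t' => if t = t' then ⊤ else ((min t t' : ℕ) : E)
  | .inl t, .inr _ => (t : E)
  | .inr _, .inl t => (t : E)
  | .inr _, .inr _ => ⊤

def fN : (ℕ ⊕ Unit) → Bool := fun _ => false
def fM : (ℕ ⊕ Unit) → Bool := Sum.elim (fun _ => false) (fun _ => true)

theorem dN_symm : ∀ a b, dN a b = dN b a := by
  rintro (t|_) (t'|_) <;> simp only [dN]
  rcases eq_or_ne t t' with rfl | hne
  · simp
  · rw [if_neg hne, if_neg (Ne.symm hne), min_comm]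

theorem dN_tri : ∀ a b c, min (dN a b) (dN b c) ≤ dN a c := by
  have hco : ∀ s t : ℕ, ((min s t : ℕ) : E) = min (s : E) (t : E) := by
    intro s t; exact_mod_cast rfl
  have hle : ∀ s t : ℕ, (s : E) ≤ (t : E) ↔ s ≤ t := by
    intro s t; exact_mod_cast Iff.rfl
  rintro (s|_) (t|_) (w|_) <;> simp only [dN] <;> (try split_ifs) <;>
    simp_all [hco, min_le_iff, le_min_iff, hle] <;> omega

theorem axN : Ax dN fN := by
  refine ⟨?_, dN_symm, dN_tri, fun _ _ _ => rfl⟩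
  rintro (t|_) <;> simp [dN]

theorem axM : Ax dN fM := by
  refine ⟨axN.1, dN_symm, dN_tri, ?_⟩
  rintro (t|_) (t'|_) htop <;> simp only [dN] at htop
  · rfl
  · exact absurd htop (by simp)
  · exact absurd htop (by simp)
  · rfl

noncomputable def xF : ∀ F : Finset (ℕ ⊕ Unit), SC.obj (op (FintypeCat.of ↥F)) :=
  fun _F => ⟨(fun a b => dN a.1 b.1, fun a => fN a.1), axN.pull Subtype.val⟩

noncomputable def yF : ∀ F : Finset (ℕ ⊕ Unit), SC.obj (op (FintypeCat.of ↥F)) :=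
  fun _F => ⟨(fun a b => dN a.1 b.1, fun a => fM a.1), axM.pull Subtype.val⟩

theorem compatX : Compat SC xF := fun _ _ _ => Subtype.ext rfl
theorem compatY : Compat SC yF := fun _ _ _ => Subtype.ext rfl

theorem hres : restrictFamily SC Sum.inl xF = restrictFamily SC Sum.inl yF := by
  funext F
  exact Subtype.ext rfl

theorem top_of_forall_le (V : ℕ∞) (h : ∀ t : ℕ, (t : ℕ∞) ≤ V) : V = ⊤ := by
  induction V using ENat.recTopCoe with
  | top => rfl
  | coe n =>
    have h2 : (n + 1 : ℕ) ≤ n := by exact_mod_cast h (n + 1)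
    omega

theorem notExt : ¬ ExtAmalg SC := by
  intro hE
  obtain ⟨L, u, v, z, hu, hz, hxz, hyz⟩ :=
    hE ℕ (ℕ ⊕ Unit) (ℕ ⊕ Unit) Sum.inl Sum.inl xF yF compatX compatY hres
  letI := Classical.decEq L
  -- component extraction from the restriction equations
  have hX : ∀ (F : Finset (ℕ ⊕ Unit)) (a b : ↥F),
      (z (F.image u)).1.1 ⟨u a.1, Finset.mem_image_of_mem u a.2⟩
        ⟨u b.1, Finset.mem_image_of_mem u b.2⟩ = dN a.1 b.1 := by
    intro F a b
    have h := congrFun hxz F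
    simp only [restrictFamily] at h
    exact congrFun (congrFun (congrArg (fun w => w.1.1) h) a) b
  have hXf : ∀ (F : Finset (ℕ ⊕ Unit)) (a : ↥F),
      (z (F.image u)).1.2 ⟨u a.1, Finset.mem_image_of_mem u a.2⟩ = fN a.1 := by
    intro F a
    have h := congrFun hxz F
    simp only [restrictFamily] at h
    exact congrFun (congrArg (fun w => w.1.2) h) a
  have hY : ∀ (F : Finset (ℕ ⊕ Unit)) (a b : ↥F),
      (z (F.image v)).1.1 ⟨v a.1, Finset.mem_image_of_mem v a.2⟩
        ⟨v b.1, Finset.mem_image_of_mem v b.2⟩ = dN a.1 b.1 := by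
    intro F a b
    have h := congrFun hyz F
    simp only [restrictFamily] at h
    exact congrFun (congrFun (congrArg (fun w => w.1.1) h) a) b
  have hYf : ∀ (F : Finset (ℕ ⊕ Unit)) (a : ↥F),
      (z (F.image v)).1.2 ⟨v a.1, Finset.mem_image_of_mem v a.2⟩ = fM a.1 := by
    intro F a
    have h := congrFun hyz F
    simp only [restrictFamily] at h
    exact congrFun (congrArg (fun w => w.1.2) h) a
  have hC : ∀ (F G : Finset L) (hFG : F ⊆ G) (a b : ↥F),
      (z F).1.1 a b = (z G).1.1 ⟨a.1, hFG a.2⟩ ⟨b.1, hFG b.2⟩ := by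
    intro F G hFG a b
    exact (congrFun (congrFun (congrArg (fun w => w.1.1) (hz F G hFG)) a) b).symm
  have hCf : ∀ (F G : Finset L) (hFG : F ⊆ G) (a : ↥F),
      (z F).1.2 a = (z G).1.2 ⟨a.1, hFG a.2⟩ := by
    intro F G hFG a
    exact (congrFun (congrArg (fun w => w.1.2) (hz F G hFG)) a).symm
  set α := u (Sum.inr ()) with hα
  set β := v (Sum.inr ()) with hβ
  have hαβ : α ∈ ({α, β} : Finset L) := by simp
  have hβαβ : β ∈ ({α, β} : Finset L) := by simp
  set V : E := (z {α, β}).1.1 ⟨α, hαβ⟩ ⟨β, hβαβ⟩ with hV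
  -- V is above every natural number
  have key : ∀ t : ℕ, (t : E) ≤ V := by
    intro t
    set F1 : Finset (ℕ ⊕ Unit) := {Sum.inr (), Sum.inl t} with hF1
    set G : Finset L := insert α (insert β ((F1.image u) ∪ (F1.image v))) with hG
    have hsub2 : ({α, β} : Finset L) ⊆ G := by
      intro c hc; simp only [Finset.mem_insert, Finset.mem_singleton] at hc
      rcases hc with rfl | rfl <;> simp [hG]
    have hsubu : F1.image u ⊆ G := fun c hc => by simp [hG, hc]
    have hsubv : F1.image v ⊆ G := fun c hc => by simp [hG, hc]
    have hinr : (Sum.inr () : ℕ ⊕ Unit) ∈ F1 := by simp [hF1]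
    have hinl : (Sum.inl t : ℕ ⊕ Unit) ∈ F1 := by simp [hF1]
    -- d_G(α, u(inl t)) = t
    have h1 : (z G).1.1 ⟨α, hsub2 hαβ⟩
        ⟨u (Sum.inl t), hsubu (Finset.mem_image_of_mem u hinl)⟩ = (t : E) := by
      have e := hX F1 ⟨Sum.inr (), hinr⟩ ⟨Sum.inl t, hinl⟩
      rw [hC (F1.image u) G hsubu] at e
      exact e
    -- d_G(u(inl t), β) = t
    have h2 : (z G).1.1 ⟨u (Sum.inl t), hsubu (Finset.mem_image_of_mem u hinl)⟩
        ⟨β, hsub2 hβαβ⟩ = (t : E) := by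
      have e := hY F1 ⟨Sum.inl t, hinl⟩ ⟨Sum.inr (), hinr⟩
      rw [hC (F1.image v) G hsubv] at e
      have heq : (⟨v (Sum.inl t), hsubv (Finset.mem_image_of_mem v hinl)⟩ : ↥G)
          = ⟨u (Sum.inl t), hsubu (Finset.mem_image_of_mem u hinl)⟩ :=
        Subtype.ext (hu t).symm
      rw [heq] at e
      exact e
    have h3 : V = (z G).1.1 ⟨α, hsub2 hαβ⟩ ⟨β, hsub2 hβαβ⟩ := by
      rw [hV, hC {α, β} G hsub2]
    have htri := (z G).2.2.2.1 ⟨α, hsub2 hαβ⟩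
      ⟨u (Sum.inl t), hsubu (Finset.mem_image_of_mem u hinl)⟩ ⟨β, hsub2 hβαβ⟩
    rw [h1, h2, min_self, ← h3] at htri
    exact htri
  have hVtop : V = ⊤ := top_of_forall_le V key
  -- labels must agree, contradiction
  have hlab := (z {α, β}).2.2.2.2 ⟨α, hαβ⟩ ⟨β, hβαβ⟩ hVtop
  have hFα : (z {α, β}).1.2 ⟨α, hαβ⟩ = false := by
    have e := hXf {Sum.inr ()} ⟨Sum.inr (), by simp⟩
    have hsub : (({Sum.inr ()} : Finset (ℕ ⊕ Unit)).image u) ⊆ ({α, β} : Finset L) := by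
      intro c hc
      simp only [Finset.mem_image, Finset.mem_singleton] at hc
      obtain ⟨a, rfl, rfl⟩ := hc
      simp [hα]
    rw [hCf _ _ hsub] at e
    exact e
  have hFβ : (z {α, β}).1.2 ⟨β, hβαβ⟩ = true := by
    have e := hYf {Sum.inr ()} ⟨Sum.inr (), by simp⟩
    have hsub : (({Sum.inr ()} : Finset (ℕ ⊕ Unit)).image v) ⊆ ({α, β} : Finset L) := by
      intro c hc
      simp only [Finset.mem_image, Finset.mem_singleton] at hc
      obtain ⟨a, rfl, rfl⟩ := hc
      simp [hβ]
    rw [hCf _ _ hsub] at e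
    exact e
  rw [hFα, hFβ] at hlab
  exact Bool.false_ne_true hlab

end Stmt19Aux

namespace Stmt19Aux2
open Stmt19

/-- Pulling back along a composite, applied form. -/
theorem map_map (S : FintypeCatᵒᵖ ⥤ Type) {a b c : FintypeCat} (f : a ⟶ b) (g : b ⟶ c)
    (s : S.obj (op c)) : S.map (f ≫ g).op s = S.map f.op (S.map g.op s) := by
  rw [op_comp, S.map_comp]; rfl

/-- Zigzags in the pushout are supported on finite subsets of `K`. -/
theorem zigzag {K N M : Type} (g : K → N) (h : K → M) {s s' : N ⊕ M}
    (hss : Relation.EqvGen (fun a b => ∃ c, a = Sum.inl (g c) ∧ b = Sum.inr (h c)) s s') :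
    ∃ Fk : Finset K, ∀ (β : Type) (p : N → β) (q : M → β),
      (∀ c ∈ Fk, p (g c) = q (h c)) → Sum.elim p q s = Sum.elim p q s' := by
  letI := Classical.decEq K
  induction hss with
  | rel a b hab =>
    obtain ⟨c, rfl, rfl⟩ := hab
    exact ⟨{c}, fun β p q hpq => by simpa using hpq c (by simp)⟩
  | refl a => exact ⟨∅, fun β p q _ => rfl⟩
  | symm a b _ ih =>
    obtain ⟨Fk, hFk⟩ := ih
    exact ⟨Fk, fun β p q hpq => (hFk β p q hpq).symm⟩
  | trans a b c _ _ ih1 ih2 =>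
    obtain ⟨F1, h1⟩ := ih1
    obtain ⟨F2, h2⟩ := ih2
    exact ⟨F1 ∪ F2, fun β p q hpq =>
      (h1 β p q fun c hc => hpq c (Finset.mem_union_left _ hc)).trans
      (h2 β p q fun c hc => hpq c (Finset.mem_union_right _ hc))⟩

theorem positive (S : FintypeCatᵒᵖ ⥤ Type) (hA : Amalg S)
    (t : ∀ n : FintypeCat, TopologicalSpace (S.obj (op n)))
    (ht : ∀ n, @CompactSpace _ (t n)) (ht2 : ∀ n, @T2Space _ (t n))
    (hcont : ∀ (n m : FintypeCat) (f : n ⟶ m), @Continuous _ _ (t m) (t n) (S.map f.op)) :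
    ExtAmalg S := by
  intro K N M g h x y hx hy hres
  letI := Classical.decEq K
  letI := Classical.decEq N
  letI := Classical.decEq M
  letI := Classical.decEq (N ⊕ M)
  set r : (N ⊕ M) → (N ⊕ M) → Prop :=
    fun a b => ∃ c, a = Sum.inl (g c) ∧ b = Sum.inr (h c) with hrdef
  letI : DecidableEq (Quot r) := Classical.decEq _
  set u : N → Quot r := fun a => Quot.mk r (Sum.inl a) with hudef
  set v : M → Quot r := fun b => Quot.mk r (Sum.inr b) with hvdef
  have hu : ∀ a : K, u (g a) = v (h a) := fun a => Quot.sound ⟨a, rfl, rfl⟩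
  -- Step 1: the key finite amalgamation lemma over subsets of the pushout
  have key : ∀ (FN : Finset N) (FM : Finset M),
      ∃ w : S.obj (op (FintypeCat.of ↥(FN.image u ∪ FM.image v))),
        S.map (Quiver.Hom.op (show FintypeCat.of ↥FN ⟶ FintypeCat.of ↥(FN.image u ∪ FM.image v)
          from FintypeCat.homMk fun a => ⟨u a.1, Finset.mem_union_left _ (Finset.mem_image_of_mem u a.2)⟩)) w
            = x FN ∧
        S.map (Quiver.Hom.op (show FintypeCat.of ↥FM ⟶ FintypeCat.of ↥(FN.image u ∪ FM.image v)
          from FintypeCat.homMk fun b => ⟨v b.1, Finset.mem_union_right _ (Finset.mem_image_of_mem v b.2)⟩)) w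
            = y FM := by
    intro FN FM
    set T : Finset (N ⊕ M) := FN.image Sum.inl ∪ FM.image Sum.inr with hTdef
    letI : ∀ s s' : N ⊕ M, Decidable (Relation.EqvGen r s s') := fun _ _ => Classical.dec _
    set zig : (N ⊕ M) → (N ⊕ M) → Finset K := fun s s' =>
      if hss : Relation.EqvGen r s s' then (zigzag g h hss).choose else ∅ with hzigdef
    have zigspec : ∀ s s' (hss : Relation.EqvGen r s s') (β : Type) (p : N → β) (q : M → β),
        (∀ c ∈ zig s s', p (g c) = q (h c)) → Sum.elim p q s = Sum.elim p q s' := by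
      intro s s' hss β p q hpq
      rw [hzigdef] at hpq
      simp only [dif_pos hss] at hpq
      exact (zigzag g h hss).choose_spec β p q hpq
    set Fk : Finset K := (T ×ˢ T).sup (fun st => zig st.1 st.2) with hFkdef
    set FN' : Finset N := FN ∪ Fk.image g with hFN'def
    set FM' : Finset M := FM ∪ Fk.image h with hFM'def
    have hFNsub : FN ⊆ FN' := Finset.subset_union_left
    have hFMsub : FM ⊆ FM' := Finset.subset_union_left
    have hgmem : ∀ c ∈ Fk, g c ∈ FN' :=
      fun c hc => Finset.mem_union_right _ (Finset.mem_image_of_mem g hc)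
    have hhmem : ∀ c ∈ Fk, h c ∈ FM' :=
      fun c hc => Finset.mem_union_right _ (Finset.mem_image_of_mem h hc)
    set g' : FintypeCat.of ↥Fk ⟶ FintypeCat.of ↥FN' :=
      FintypeCat.homMk (fun c => ⟨g c.1, hgmem c.1 c.2⟩) with hg'def
    set h' : FintypeCat.of ↥Fk ⟶ FintypeCat.of ↥FM' :=
      FintypeCat.homMk (fun c => ⟨h c.1, hhmem c.1 c.2⟩) with hh'def
    -- the two restrictions agree on Fk
    have hagree : S.map g'.op (x FN') = S.map h'.op (y FM') := by
      have e := congrFun hres Fk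
      have hgcomp : g' = (show FintypeCat.of ↥Fk ⟶ FintypeCat.of ↥(Fk.image g) from
            FintypeCat.homMk fun a => ⟨g a.1, Finset.mem_image_of_mem g a.2⟩) ≫
          (incl (Fk.image g) FN' (by
            intro c hc; obtain ⟨a, ha, rfl⟩ := Finset.mem_image.mp hc; exact hgmem a ha)) := by
        exact FintypeCat.hom_ext _ _ fun a => rfl
      have hhcomp : h' = (show FintypeCat.of ↥Fk ⟶ FintypeCat.of ↥(Fk.image h) from
            FintypeCat.homMk fun a => ⟨h a.1, Finset.mem_image_of_mem h a.2⟩) ≫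
          (incl (Fk.image h) FM' (by
            intro c hc; obtain ⟨a, ha, rfl⟩ := Finset.mem_image.mp hc; exact hhmem a ha)) := by
        exact FintypeCat.hom_ext _ _ fun a => rfl
      rw [hgcomp, hhcomp, map_map, map_map, hx _ _ _, hy _ _ _]
      exact e
    obtain ⟨l, u', v', z', hcomm, hxz', hyz'⟩ := hA _ _ _ g' h' (x FN') (y FM') hagree
    -- option-valued evaluation maps
    set p : N → Option ↥l := fun a =>
      if ha : a ∈ FN' then some (u' ⟨a, ha⟩) else none with hpdef
    set q : M → Option ↥l := fun b =>
      if hb : b ∈ FM' then some (v' ⟨b, hb⟩) else none with hqdef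
    have pval : ∀ (a : N) (ha : a ∈ FN'), p a = some (u' ⟨a, ha⟩) := fun a ha => dif_pos ha
    have qval : ∀ (b : M) (hb : b ∈ FM'), q b = some (v' ⟨b, hb⟩) := fun b hb => dif_pos hb
    have hpq : ∀ c ∈ Fk, p (g c) = q (h c) := by
      intro c hc
      rw [pval (g c) (hgmem c hc), qval (h c) (hhmem c hc)]
      exact congrArg some (ConcreteCategory.congr_hom hcomm ⟨c, hc⟩)
    have keyzig : ∀ s ∈ T, ∀ s' ∈ T, Quot.mk r s = Quot.mk r s' →
        Sum.elim p q s = Sum.elim p q s' := by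
      intro s hs s' hs' hqq
      refine zigspec s s' (Quot.eqvGen_exact hqq) (Option ↥l) p q fun c hc => hpq c ?_
      exact (Finset.le_sup (f := fun st : (N ⊕ M) × (N ⊕ M) => zig st.1 st.2)
        (b := (s, s')) (Finset.mem_product.mpr ⟨hs, hs'⟩)) hc
    have hmemTl : ∀ a ∈ FN, (Sum.inl a : N ⊕ M) ∈ T :=
      fun a ha => Finset.mem_union_left _ (Finset.mem_image_of_mem _ ha)
    have hmemTr : ∀ b ∈ FM, (Sum.inr b : N ⊕ M) ∈ T :=
      fun b hb => Finset.mem_union_right _ (Finset.mem_image_of_mem _ hb)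
    -- the comparison map σ from the subset of the pushout to the amalgam
    have hmv : ∀ (c : ↥(FN.image u ∪ FM.image v)),
        ¬(∃ a, a ∈ FN ∧ u a = c.1) → ∃ b, b ∈ FM ∧ v b = c.1 := by
      intro c hn
      rcases Finset.mem_union.mp c.2 with hc | hc
      · obtain ⟨a, ha, hae⟩ := Finset.mem_image.mp hc
        exact absurd ⟨a, ha, hae⟩ hn
      · obtain ⟨b, hb, hbe⟩ := Finset.mem_image.mp hc
        exact ⟨b, hb, hbe⟩
    letI : ∀ (c : ↥(FN.image u ∪ FM.image v)), Decidable (∃ a, a ∈ FN ∧ u a = c.1) :=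
      fun _ => Classical.dec _
    set σ : FintypeCat.of ↥(FN.image u ∪ FM.image v) ⟶ l := FintypeCat.homMk (fun c =>
      if hn : ∃ a, a ∈ FN ∧ u a = c.1 then u' ⟨hn.choose, hFNsub hn.choose_spec.1⟩
      else v' ⟨(hmv c hn).choose, hFMsub (hmv c hn).choose_spec.1⟩) with hσdef
    -- σ is compatible with u' and v'
    have hσu : ∀ (a : N) (ha : a ∈ FN) (hm : u a ∈ FN.image u ∪ FM.image v),
        σ ⟨u a, hm⟩ = u' ⟨a, hFNsub ha⟩ := by
      intro a ha hm
      have hn : ∃ a', a' ∈ FN ∧ u a' = u a := ⟨a, ha, rfl⟩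
      rw [hσdef]
      change dite _ _ _ = _; simp only [dif_pos hn]
      have hz := keyzig (Sum.inl hn.choose) (hmemTl _ hn.choose_spec.1) (Sum.inl a)
        (hmemTl a ha) hn.choose_spec.2
      simp only [Sum.elim_inl] at hz
      rw [pval _ (hFNsub hn.choose_spec.1), pval a (hFNsub ha)] at hz
      exact Option.some.inj hz
    have hσv : ∀ (b : M) (hb : b ∈ FM) (hm : v b ∈ FN.image u ∪ FM.image v),
        σ ⟨v b, hm⟩ = v' ⟨b, hFMsub hb⟩ := by
      intro b hb hm
      rw [hσdef]
      by_cases hn : ∃ a', a' ∈ FN ∧ u a' = v b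
      · change dite _ _ _ = _; simp only [dif_pos hn]
        have hz := keyzig (Sum.inl hn.choose) (hmemTl _ hn.choose_spec.1) (Sum.inr b)
          (hmemTr b hb) hn.choose_spec.2
        simp only [Sum.elim_inl, Sum.elim_inr] at hz
        rw [pval _ (hFNsub hn.choose_spec.1), qval b (hFMsub hb)] at hz
        exact Option.some.inj hz
      · change dite _ _ _ = _; simp only [dif_neg hn]
        have hch := (hmv ⟨v b, hm⟩ hn).choose_spec
        have hz := keyzig (Sum.inr (hmv ⟨v b, hm⟩ hn).choose) (hmemTr _ hch.1) (Sum.inr b)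
          (hmemTr b hb) hch.2
        simp only [Sum.elim_inr] at hz
        rw [qval _ (hFMsub hch.1), qval b (hFMsub hb)] at hz
        exact Option.some.inj hz
    refine ⟨S.map σ.op z', ?_, ?_⟩
    · have hcomp : (show FintypeCat.of ↥FN ⟶ FintypeCat.of ↥(FN.image u ∪ FM.image v)
          from FintypeCat.homMk fun a => ⟨u a.1, Finset.mem_union_left _ (Finset.mem_image_of_mem u a.2)⟩) ≫ σ
          = incl FN FN' hFNsub ≫ u' := by
        refine FintypeCat.hom_ext _ _ fun a => ?_
        exact hσu a.1 a.2 _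
      rw [← map_map S _ σ z', hcomp, map_map, hxz']
      exact hx FN FN' hFNsub
    · have hcomp : (show FintypeCat.of ↥FM ⟶ FintypeCat.of ↥(FN.image u ∪ FM.image v)
          from FintypeCat.homMk fun b => ⟨v b.1, Finset.mem_union_right _ (Finset.mem_image_of_mem v b.2)⟩) ≫ σ
          = incl FM FM' hFMsub ≫ v' := by
        refine FintypeCat.hom_ext _ _ fun b => ?_
        exact hσv b.1 b.2 _
      rw [← map_map S _ σ z', hcomp, map_map, hyz']
      exact hy FM FM' hFMsub
  -- Step 2: for every finite subset G of the pushout there is an element of S(G)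
  -- compatible with all restrictions of x and y landing in G
  have strong : ∀ G : Finset (Quot r),
      ∃ w : S.obj (op (FintypeCat.of ↥G)),
        (∀ (FN : Finset N) (hsub : ∀ a ∈ FN, u a ∈ G),
          S.map (Quiver.Hom.op (show FintypeCat.of ↥FN ⟶ FintypeCat.of ↥G from
            FintypeCat.homMk fun a => ⟨u a.1, hsub a.1 a.2⟩)) w = x FN) ∧
        (∀ (FM : Finset M) (hsub : ∀ b ∈ FM, v b ∈ G),
          S.map (Quiver.Hom.op (show FintypeCat.of ↥FM ⟶ FintypeCat.of ↥G from
            FintypeCat.homMk fun b => ⟨v b.1, hsub b.1 b.2⟩)) w = y FM) := by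
    intro G
    letI : TopologicalSpace (S.obj (op (FintypeCat.of ↥G))) := t _
    haveI : CompactSpace (S.obj (op (FintypeCat.of ↥G))) := ht _
    haveI : T2Space (S.obj (op (FintypeCat.of ↥G))) := ht2 _
    -- a finite covering of G by images
    have cover : ∃ (FN0 : Finset N) (FM0 : Finset M),
        ∀ α ∈ G, (∃ a ∈ FN0, u a = α) ∨ (∃ b ∈ FM0, v b = α) := by
      set rep : Quot r → N ⊕ M := fun α => (Quot.exists_rep α).choose with hrepdef
      have hrep : ∀ α, Quot.mk r (rep α) = α := fun α => (Quot.exists_rep α).choose_spec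
      refine ⟨(G.image rep).preimage Sum.inl Sum.inl_injective.injOn,
              (G.image rep).preimage Sum.inr Sum.inr_injective.injOn, ?_⟩
      intro α hα
      rcases hre : rep α with a | b
      · refine Or.inl ⟨a, ?_, ?_⟩
        · exact Finset.mem_preimage.mpr (hre ▸ Finset.mem_image_of_mem rep hα)
        · rw [hudef]; show Quot.mk r (Sum.inl a) = α; rw [← hre]; exact hrep α
      · refine Or.inr ⟨b, ?_, ?_⟩
        · exact Finset.mem_preimage.mpr (hre ▸ Finset.mem_image_of_mem rep hα)
        · rw [hvdef]; show Quot.mk r (Sum.inr b) = α; rw [← hre]; exact hrep α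
    obtain ⟨FN0, FM0, hcover⟩ := cover
    -- the directed family of closed subsets
    set ι := {P : Finset N × Finset M // (∀ a ∈ P.1, u a ∈ G) ∧ (∀ b ∈ P.2, v b ∈ G)} with hι
    haveI : Nonempty ι := ⟨⟨(∅, ∅), by simp, by simp⟩⟩
    set A : ι → Set (S.obj (op (FintypeCat.of ↥G))) := fun i =>
      {w | S.map (Quiver.Hom.op (show FintypeCat.of ↥i.1.1 ⟶ FintypeCat.of ↥G from
              FintypeCat.homMk fun a => ⟨u a.1, i.2.1 a.1 a.2⟩)) w = x i.1.1 ∧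
           S.map (Quiver.Hom.op (show FintypeCat.of ↥i.1.2 ⟶ FintypeCat.of ↥G from
              FintypeCat.homMk fun b => ⟨v b.1, i.2.2 b.1 b.2⟩)) w = y i.1.2} with hAdef
    -- restriction monotonicity: membership in A for a larger pair implies it for a smaller one
    have hAmono : ∀ (i j : ι), i.1.1 ⊆ j.1.1 → i.1.2 ⊆ j.1.2 → A j ⊆ A i := by
      intro i j hN hM w hw
      constructor
      · have hcomp : (show FintypeCat.of ↥i.1.1 ⟶ FintypeCat.of ↥G from
              FintypeCat.homMk fun a => ⟨u a.1, i.2.1 a.1 a.2⟩)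
            = incl i.1.1 j.1.1 hN ≫ (show FintypeCat.of ↥j.1.1 ⟶ FintypeCat.of ↥G from
              FintypeCat.homMk fun a => ⟨u a.1, j.2.1 a.1 a.2⟩) := by
          exact FintypeCat.hom_ext _ _ fun a => rfl
        rw [hcomp, map_map, hw.1]
        exact hx _ _ hN
      · have hcomp : (show FintypeCat.of ↥i.1.2 ⟶ FintypeCat.of ↥G from
              FintypeCat.homMk fun b => ⟨v b.1, i.2.2 b.1 b.2⟩)
            = incl i.1.2 j.1.2 hM ≫ (show FintypeCat.of ↥j.1.2 ⟶ FintypeCat.of ↥G from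
              FintypeCat.homMk fun b => ⟨v b.1, j.2.2 b.1 b.2⟩) := by
          exact FintypeCat.hom_ext _ _ fun b => rfl
        rw [hcomp, map_map, hw.2]
        exact hy _ _ hM
    -- each A i is nonempty, via `key`
    have hAne : ∀ i : ι, (A i).Nonempty := by
      intro i
      set FN1 : Finset N := i.1.1 ∪ FN0 with hFN1
      set FM1 : Finset M := i.1.2 ∪ FM0 with hFM1
      obtain ⟨w0, hw1, hw2⟩ := key FN1 FM1
      have hGsub : G ⊆ FN1.image u ∪ FM1.image v := by
        intro α hα
        rcases hcover α hα with ⟨a, ha, rfl⟩ | ⟨b, hb, rfl⟩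
        · exact Finset.mem_union_left _
            (Finset.mem_image_of_mem u (Finset.mem_union_right _ ha))
        · exact Finset.mem_union_right _
            (Finset.mem_image_of_mem v (Finset.mem_union_right _ hb))
      refine ⟨S.map (incl G _ hGsub).op w0, ?_, ?_⟩
      · have hcomp : (show FintypeCat.of ↥i.1.1 ⟶ FintypeCat.of ↥G from
              FintypeCat.homMk fun a => ⟨u a.1, i.2.1 a.1 a.2⟩) ≫ incl G _ hGsub
            = incl i.1.1 FN1 Finset.subset_union_left ≫
              (show FintypeCat.of ↥FN1 ⟶ FintypeCat.of ↥(FN1.image u ∪ FM1.image v) from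
                FintypeCat.homMk fun a => ⟨u a.1, Finset.mem_union_left _ (Finset.mem_image_of_mem u a.2)⟩) := by
          exact FintypeCat.hom_ext _ _ fun a => rfl
        rw [← map_map, hcomp, map_map, hw1]
        exact hx _ _ Finset.subset_union_left
      · have hcomp : (show FintypeCat.of ↥i.1.2 ⟶ FintypeCat.of ↥G from
              FintypeCat.homMk fun b => ⟨v b.1, i.2.2 b.1 b.2⟩) ≫ incl G _ hGsub
            = incl i.1.2 FM1 Finset.subset_union_left ≫
              (show FintypeCat.of ↥FM1 ⟶ FintypeCat.of ↥(FN1.image u ∪ FM1.image v) from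
                FintypeCat.homMk fun b => ⟨v b.1, Finset.mem_union_right _ (Finset.mem_image_of_mem v b.2)⟩) := by
          exact FintypeCat.hom_ext _ _ fun b => rfl
        rw [← map_map, hcomp, map_map, hw2]
        exact hy _ _ Finset.subset_union_left
    -- each A i is closed and compact
    have hAcl : ∀ i : ι, IsClosed (A i) := by
      intro i
      refine IsClosed.inter ?_ ?_
      · exact isClosed_eq (hcont _ _ _) continuous_const
      · exact isClosed_eq (hcont _ _ _) continuous_const
    have hAcp : ∀ i : ι, IsCompact (A i) := fun i => (hAcl i).isCompact
    have hdir : Directed (· ⊇ ·) A := by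
      intro i j
      refine ⟨⟨(i.1.1 ∪ j.1.1, i.1.2 ∪ j.1.2), ?_, ?_⟩, ?_, ?_⟩
      · intro a ha
        rcases Finset.mem_union.mp ha with ha | ha
        exacts [i.2.1 a ha, j.2.1 a ha]
      · intro b hb
        rcases Finset.mem_union.mp hb with hb | hb
        exacts [i.2.2 b hb, j.2.2 b hb]
      · exact hAmono i _ Finset.subset_union_left Finset.subset_union_left
      · exact hAmono j _ Finset.subset_union_right Finset.subset_union_right
    obtain ⟨w, hw⟩ :=
      IsCompact.nonempty_iInter_of_directed_nonempty_isCompact_isClosed A hdir hAne hAcp hAcl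
    simp only [Set.mem_iInter] at hw
    refine ⟨w, ?_, ?_⟩
    · intro FN hsub
      exact (hw ⟨(FN, ∅), hsub, by simp⟩).1
    · intro FM hsub
      exact (hw ⟨(∅, FM), by simp, hsub⟩).2
  -- Step 3: compactness in the product over all finite subsets of the pushout
  letI : ∀ F : Finset (Quot r), TopologicalSpace (S.obj (op (FintypeCat.of ↥F))) := fun _ => t _
  haveI : ∀ F : Finset (Quot r), CompactSpace (S.obj (op (FintypeCat.of ↥F))) := fun _ => ht _
  haveI : ∀ F : Finset (Quot r), T2Space (S.obj (op (FintypeCat.of ↥F))) := fun _ => ht2 _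
  set C : Finset (Quot r) → Set (∀ F : Finset (Quot r), S.obj (op (FintypeCat.of ↥F))) :=
    fun G =>
    {z | (∀ (F F' : Finset (Quot r)) (hFF : F ⊆ F'), F' ⊆ G →
            S.map (incl F F' hFF).op (z F') = z F) ∧
         (∀ FN : Finset N, FN.image u ⊆ G →
            S.map (Quiver.Hom.op (show FintypeCat.of ↥FN ⟶ FintypeCat.of ↥(FN.image u) from
              FintypeCat.homMk fun a => ⟨u a.1, Finset.mem_image_of_mem u a.2⟩)) (z (FN.image u)) = x FN) ∧
         (∀ FM : Finset M, FM.image v ⊆ G →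
            S.map (Quiver.Hom.op (show FintypeCat.of ↥FM ⟶ FintypeCat.of ↥(FM.image v) from
              FintypeCat.homMk fun b => ⟨v b.1, Finset.mem_image_of_mem v b.2⟩)) (z (FM.image v)) = y FM)}
    with hCdef
  have hCne : ∀ G, (C G).Nonempty := by
    intro G
    obtain ⟨w, hw1, hw2⟩ := strong G
    refine ⟨fun F => if hF : F ⊆ G then S.map (incl F G hF).op w else (strong F).choose,
      ?_, ?_, ?_⟩
    · intro F F' hFF hF'G
      have hFG : F ⊆ G := hFF.trans hF'G
      simp only [dif_pos hF'G, dif_pos hFG]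
      rw [← map_map,
        show incl F F' hFF ≫ incl F' G hF'G = incl F G hFG from FintypeCat.hom_ext _ _ fun a => rfl]
    · intro FN hsub
      simp only [dif_pos hsub]
      rw [← map_map,
        show (show FintypeCat.of ↥FN ⟶ FintypeCat.of ↥(FN.image u) from
            FintypeCat.homMk fun a => ⟨u a.1, Finset.mem_image_of_mem u a.2⟩) ≫ incl (FN.image u) G hsub
          = (show FintypeCat.of ↥FN ⟶ FintypeCat.of ↥G from
            FintypeCat.homMk fun a => ⟨u a.1, hsub (Finset.mem_image_of_mem u a.2)⟩) from FintypeCat.hom_ext _ _ fun a => rfl]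
      exact hw1 FN fun a ha => hsub (Finset.mem_image_of_mem u ha)
    · intro FM hsub
      simp only [dif_pos hsub]
      rw [← map_map,
        show (show FintypeCat.of ↥FM ⟶ FintypeCat.of ↥(FM.image v) from
            FintypeCat.homMk fun b => ⟨v b.1, Finset.mem_image_of_mem v b.2⟩) ≫ incl (FM.image v) G hsub
          = (show FintypeCat.of ↥FM ⟶ FintypeCat.of ↥G from
            FintypeCat.homMk fun b => ⟨v b.1, hsub (Finset.mem_image_of_mem v b.2)⟩) from FintypeCat.hom_ext _ _ fun b => rfl]
      exact hw2 FM fun b hb => hsub (Finset.mem_image_of_mem v hb)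
  have hCcl : ∀ G, IsClosed (C G) := by
    intro G
    have hrw : C G =
        (⋂ (F : Finset (Quot r)), ⋂ (F' : Finset (Quot r)), ⋂ (hFF : F ⊆ F'), ⋂ (_ : F' ⊆ G),
          {z : ∀ F : Finset (Quot r), S.obj (op (FintypeCat.of ↥F)) |
            S.map (incl F F' hFF).op (z F') = z F}) ∩
        ((⋂ (FN : Finset N), ⋂ (_ : FN.image u ⊆ G),
          {z : ∀ F : Finset (Quot r), S.obj (op (FintypeCat.of ↥F)) |
            S.map (Quiver.Hom.op (show FintypeCat.of ↥FN ⟶ FintypeCat.of ↥(FN.image u) from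
              FintypeCat.homMk fun a => ⟨u a.1, Finset.mem_image_of_mem u a.2⟩)) (z (FN.image u)) = x FN}) ∩
        (⋂ (FM : Finset M), ⋂ (_ : FM.image v ⊆ G),
          {z : ∀ F : Finset (Quot r), S.obj (op (FintypeCat.of ↥F)) |
            S.map (Quiver.Hom.op (show FintypeCat.of ↥FM ⟶ FintypeCat.of ↥(FM.image v) from
              FintypeCat.homMk fun b => ⟨v b.1, Finset.mem_image_of_mem v b.2⟩)) (z (FM.image v)) = y FM})) := by
      ext z
      simp only [hCdef, Set.mem_setOf_eq, Set.mem_inter_iff, Set.mem_iInter]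
    rw [hrw]
    refine IsClosed.inter ?_ (IsClosed.inter ?_ ?_)
    · refine isClosed_iInter fun F => isClosed_iInter fun F' => isClosed_iInter fun hFF =>
        isClosed_iInter fun _ => isClosed_eq ?_ ?_
      · exact (hcont _ _ _).comp (continuous_apply F')
      · exact continuous_apply F
    · refine isClosed_iInter fun FN => isClosed_iInter fun _ => isClosed_eq ?_ continuous_const
      exact (hcont _ _ _).comp (continuous_apply _)
    · refine isClosed_iInter fun FM => isClosed_iInter fun _ => isClosed_eq ?_ continuous_const
      exact (hcont _ _ _).comp (continuous_apply _)
  have hCmono : ∀ {G G' : Finset (Quot r)}, G ⊆ G' → C G' ⊆ C G := by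
    intro G G' hGG z hzC
    exact ⟨fun F F' hFF hF'G => hzC.1 F F' hFF (hF'G.trans hGG),
      fun FN hsub => hzC.2.1 FN (hsub.trans hGG),
      fun FM hsub => hzC.2.2 FM (hsub.trans hGG)⟩
  have hCdir : Directed (· ⊇ ·) C := fun G G' =>
    ⟨G ∪ G', hCmono Finset.subset_union_left, hCmono Finset.subset_union_right⟩
  obtain ⟨z, hz⟩ :=
    IsCompact.nonempty_iInter_of_directed_nonempty_isCompact_isClosed C hCdir hCne
      (fun G => (hCcl G).isCompact) hCcl
  simp only [Set.mem_iInter] at hz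
  refine ⟨Quot r, u, v, z, hu, ?_, ?_, ?_⟩
  · exact fun F F' hFF => (hz F').1 F F' hFF (Finset.Subset.refl _)
  · funext FN
    exact (hz (FN.image u)).2.1 FN (Finset.Subset.refl _)
  · funext FM
    exact (hz (FM.image v)).2.2 FM (Finset.Subset.refl _)

end Stmt19Aux2

open Stmt19 in
/-- Amalgamation for a presheaf `S : FinSetᵒᵖ ⥤ Set` does *not* in
general imply amalgamation for its extension by continuity `S̄ : Setᵒᵖ ⥤ Set`; but if each
`S(n)` carries a compact Hausdorff topology making `S` a functor into compact spaces, then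
`S̄` does have the amalgamation property for cospans of arbitrary sets. -/
theorem stmt_19 :
    (¬ ∀ S : FintypeCatᵒᵖ ⥤ Type, Amalg S → ExtAmalg S) ∧
      ∀ S : FintypeCatᵒᵖ ⥤ Type, Amalg S →
        ∀ t : ∀ n : FintypeCat, TopologicalSpace (S.obj (op n)),
          (∀ n, @CompactSpace _ (t n)) → (∀ n, @T2Space _ (t n)) →
          (∀ (n m : FintypeCat) (f : n ⟶ m), @Continuous _ _ (t m) (t n) (S.map f.op)) →
          ExtAmalg S := by
  constructor
  · intro hall
    exact Stmt19Aux.notExt (hall Stmt19Aux.SC Stmt19Aux.amalgSC)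
  · intro S hA t ht ht2 hcont
    exact Stmt19Aux2.positive S hA t ht ht2 hcont
end
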